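/- arXiv:1810.11795 — 4 statements merged into one kernel-verified Lean document; each statement's English description precedes it below -/
import Mathlib

section
/- For positive integers p, q and integer k≥0, the reflection formula G_{k+3}(p-1,q) + (-1)^k G_{k+3}(q-1,p) = Σ_{a+b=k} (-1)^b ζ({1}^{p-1}, a+2) ζ({1}^{q-1}, b+2) holds. -/
open scoped BigOperators

/-- Multiple zeta value ζ(α 0, ..., α (r-1)). -/
noncomputable def mzv {r : ℕ} (α : Fin r → ℕ) : ℝ :=
  ∑' f : {f : Fin r → ℕ // StrictMono f ∧ ∀ i, 0 < f i},
    ∏ i, ((f.1 i : ℝ) ^ (α i))⁻¹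

/-- Multiple zeta-star value ζ*(α 0, ..., α (r-1)). -/
noncomputable def mzs {r : ℕ} (α : Fin r → ℕ) : ℝ :=
  ∑' f : {f : Fin r → ℕ // Monotone f ∧ ∀ i, 0 < f i},
    ∏ i, ((f.1 i : ℝ) ^ (α i))⁻¹

/-- Riemann zeta value ζ(s) for integer s. -/
noncomputable def rz (s : ℕ) : ℝ := ∑' k : ℕ+, ((k : ℝ) ^ s)⁻¹

/-- The Euler sum G_{n+2}(p,q);  `G n p q` corresponds to G_{n+2}(p,q). -/
noncomputable def G (n p q : ℕ) : ℝ :=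
  ∑' x : {fg : (Fin (p + 1) → ℕ) × (Fin q → ℕ) //
      StrictMono fg.1 ∧ (∀ i, 0 < fg.1 i) ∧ Monotone fg.2 ∧
      (∀ j, 0 < fg.2 j) ∧ ∀ j, fg.2 j ≤ fg.1 (Fin.last p)},
    ((∏ i : Fin p, ((x.1.1 i.castSucc : ℝ))⁻¹) *
      ((x.1.1 (Fin.last p) : ℝ) ^ (n + 2))⁻¹) *
      ∏ j : Fin q, ((x.1.2 j : ℝ))⁻¹

/-- {1}^m : m repetitions of 1. -/
def ones (m : ℕ) : Fin m → ℕ := fun _ => 1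
/-- {2}^m : m repetitions of 2. -/
def twos (m : ℕ) : Fin m → ℕ := fun _ => 2
/-- the exponent string ({2}^a, 3, {2}^b). -/
def z23 (a b : ℕ) : Fin (a + 1 + b) → ℕ :=
  Fin.append (Fin.append (twos a) ![3]) (twos b)


/-!
Write `a_r(M) = ∑_{0<k₁<⋯<k_r<M} 1/(k₁⋯k_r)` and `s_q(M) = ∑_{0<ℓ₁≤⋯≤ℓ_q≤M} 1/(ℓ₁⋯ℓ_q)`.
Grouping the chains by their largest index gives `ζ({1}^r, n) = ∑_M a_r(M)/Mⁿ` and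
`G_{n+2}(r, q) = ∑_M a_r(M) s_q(M)/M^{n+2}`. Peeling off the largest index of `a_s` and
telescoping `1/(N(N+M)) = (1/M)(1/N - 1/(N+M))` gives, by induction on `s`,
`∑_N a_s(N)/(N(N+M)) = s_{s+1}(M)/M`.
The right-hand side of the reflection formula is a double series over `(M, N)`; by the partial
fraction decomposition
`∑_{a+b=k} (-1)^b/(M^{a+2} N^{b+2}) = 1/(M^{k+2} N(N+M)) + (-1)^k/(N^{k+2} M(M+N))`
it splits into two double series, and summing each one over `N`, resp. `M`, by the identity above
turns them into `G_{k+3}(r, s+1)` and `(-1)^k G_{k+3}(s, r+1)`.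
-/

open Finset Filter Topology

-- `a_r(M)` and `s_q(M)` above, defined by peeling off the largest index
noncomputable def strictChainSum : ℕ → ℕ → ℝ
  | 0, _ => 1
  | r + 1, M => ∑ j ∈ Ico 1 M, strictChainSum r j / j

noncomputable def monoChainSum : ℕ → ℕ → ℝ
  | 0, _ => 1
  | q + 1, M => ∑ j ∈ Icc 1 M, monoChainSum q j / j

lemma strictChainSum_nonneg (r M : ℕ) : 0 ≤ strictChainSum r M := by
  induction r generalizing M with
  | zero => exact zero_le_one
  | succ r ih => exact sum_nonneg fun j _ => div_nonneg (ih j) j.cast_nonneg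

lemma monoChainSum_nonneg (q M : ℕ) : 0 ≤ monoChainSum q M := by
  induction q generalizing M with
  | zero => exact zero_le_one
  | succ q ih => exact sum_nonneg fun j _ => div_nonneg (ih j) j.cast_nonneg

lemma strictChainSum_le_monoChainSum (r M : ℕ) : strictChainSum r M ≤ monoChainSum r M := by
  induction r generalizing M with
  | zero => rfl
  | succ r ih =>
    calc strictChainSum (r + 1) M ≤ ∑ j ∈ Ico 1 M, monoChainSum r j / j :=
          sum_le_sum fun j _ => div_le_div_of_nonneg_right (ih j) j.cast_nonneg
      _ ≤ monoChainSum (r + 1) M :=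
          sum_le_sum_of_subset_of_nonneg Ico_subset_Icc_self fun j _ _ =>
            div_nonneg (monoChainSum_nonneg r j) j.cast_nonneg

lemma sum_Icc_inv_sqrt_le (M : ℕ) : ∑ j ∈ Icc 1 M, (√(j : ℝ))⁻¹ ≤ 2 * √(M : ℝ) := by
  induction M with
  | zero => simp
  | succ M ih =>
    rw [sum_Icc_succ_top (by omega)]
    have hM : (0 : ℝ) < √((M + 1 : ℕ) : ℝ) := Real.sqrt_pos.2 (by positivity)
    have hsq : √((M + 1 : ℕ) : ℝ) ^ 2 = √(M : ℝ) ^ 2 + 1 := by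
      rw [Real.sq_sqrt (by positivity), Real.sq_sqrt (by positivity)]; push_cast; ring
    -- `2√(M+1) (√(M+1) - √M) ≥ (√(M+1) + √M)(√(M+1) - √M) = 1`
    have : (√((M + 1 : ℕ) : ℝ))⁻¹ ≤ 2 * √((M + 1 : ℕ) : ℝ) - 2 * √(M : ℝ) := by
      rw [inv_le_iff_one_le_mul₀' hM]
      nlinarith [Real.sqrt_nonneg (M : ℝ)]
    linarith

lemma monoChainSum_le (q : ℕ) {M : ℕ} (hM : 0 < M) : monoChainSum q M ≤ 2 ^ q * √(M : ℝ) := by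
  induction q generalizing M with
  | zero => simpa [monoChainSum] using Real.one_le_sqrt.2 (Nat.one_le_cast.2 hM)
  | succ q ih =>
    calc monoChainSum (q + 1) M ≤ ∑ j ∈ Icc 1 M, 2 ^ q * (√(j : ℝ))⁻¹ := by
          refine sum_le_sum fun j hj => ?_
          have hj : 0 < j := (mem_Icc.1 hj).1
          calc monoChainSum q j / j ≤ 2 ^ q * √(j : ℝ) / j := by gcongr; exact ih hj
            _ = 2 ^ q * (√(j : ℝ))⁻¹ := by rw [mul_div_assoc, Real.sqrt_div_self', one_div]
      _ ≤ 2 ^ (q + 1) * √(M : ℝ) := by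
          rw [← mul_sum, pow_succ, mul_assoc]; gcongr; exact sum_Icc_inv_sqrt_le M

lemma strictChainSum_le (r : ℕ) {M : ℕ} (hM : 0 < M) : strictChainSum r M ≤ 2 ^ r * √(M : ℝ) :=
  (strictChainSum_le_monoChainSum r M).trans (monoChainSum_le r hM)

lemma summable_strictChainSum_div_pow (r : ℕ) {n : ℕ} (hn : 2 ≤ n) :
    Summable fun M : ℕ => strictChainSum r M / (M : ℝ) ^ n := by
  refine Summable.of_nonneg_of_le (fun M => div_nonneg (strictChainSum_nonneg r M) (by positivity))
    (fun M => ?_) ((Real.summable_nat_rpow.2 (by norm_num : (1 / 2 - 2 : ℝ) < -1)).mul_left (2 ^ r))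
  rcases Nat.eq_zero_or_pos M with rfl | hM
  · rw [Nat.cast_zero, zero_pow (by omega : n ≠ 0), div_zero]
    positivity
  have hM1 : (1 : ℝ) ≤ M := by exact_mod_cast hM
  calc strictChainSum r M / (M : ℝ) ^ n ≤ 2 ^ r * √(M : ℝ) / (M : ℝ) ^ 2 := by
        gcongr
        exact strictChainSum_le r hM
    _ = 2 ^ r * (M : ℝ) ^ (1 / 2 - 2 : ℝ) := by
        rw [Real.rpow_sub (by positivity), Real.rpow_two, ← Real.sqrt_eq_rpow, mul_div_assoc]

lemma summable_strictChainSum_mul_monoChainSum_div_pow (r q : ℕ) {n : ℕ} (hn : 3 ≤ n) :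
    Summable fun M : ℕ => strictChainSum r M * monoChainSum q M / (M : ℝ) ^ n := by
  refine Summable.of_nonneg_of_le (fun M => by
      have := strictChainSum_nonneg r M; have := monoChainSum_nonneg q M; positivity)
    (fun M => ?_) ((Real.summable_nat_pow_inv.2 one_lt_two).mul_left (2 ^ r * 2 ^ q))
  rcases Nat.eq_zero_or_pos M with rfl | hM
  · simp [zero_pow (by omega : n ≠ 0)]
  have hM1 : (1 : ℝ) ≤ M := by exact_mod_cast hM
  calc strictChainSum r M * monoChainSum q M / (M : ℝ) ^ n
      ≤ 2 ^ r * √(M : ℝ) * (2 ^ q * √(M : ℝ)) / (M : ℝ) ^ 3 := by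
        gcongr
        · exact monoChainSum_nonneg q M
        · exact strictChainSum_le r hM
        · exact monoChainSum_le q hM
    _ = 2 ^ r * 2 ^ q * ((M : ℝ) ^ 2)⁻¹ := by
        rw [mul_mul_mul_comm, Real.mul_self_sqrt (by positivity)]
        field_simp

lemma strictMono_snoc_iff {α : Type*} [Preorder α] {r : ℕ} {g : Fin r → α} {a : α} :
    StrictMono (Fin.snoc g a : Fin (r + 1) → α) ↔ StrictMono g ∧ ∀ i, g i < a := by
  refine ⟨fun h => ⟨fun i j hij => by simpa using h (Fin.castSucc_lt_castSucc_iff.2 hij),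
    fun i => by simpa using h (Fin.castSucc_lt_last i)⟩, fun ⟨hg, ha⟩ i j hij => ?_⟩
  cases j using Fin.lastCases with
  | last =>
    cases i using Fin.lastCases with
    | last => exact absurd hij (lt_irrefl _)
    | cast i => simpa using ha i
  | cast j =>
    cases i using Fin.lastCases with
    | last => exact absurd hij (Fin.le_last _).not_gt
    | cast i => simpa using hg (Fin.castSucc_lt_castSucc_iff.1 hij)

lemma monotone_snoc_iff {α : Type*} [Preorder α] {r : ℕ} {g : Fin r → α} {a : α} :
    Monotone (Fin.snoc g a : Fin (r + 1) → α) ↔ Monotone g ∧ ∀ i, g i ≤ a := by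
  refine ⟨fun h => ⟨fun i j hij => by simpa using h (Fin.castSucc_le_castSucc_iff.2 hij),
    fun i => by simpa using h (Fin.castSucc_lt_last i).le⟩, fun ⟨hg, ha⟩ i j hij => ?_⟩
  cases j using Fin.lastCases with
  | last =>
    cases i using Fin.lastCases with
    | last => exact le_rfl
    | cast i => simpa using ha i
  | cast j =>
    cases i using Fin.lastCases with
    | last => exact absurd hij (Fin.castSucc_lt_last j).not_ge
    | cast i => simpa using hg (Fin.castSucc_le_castSucc_iff.1 hij)

lemma sum_eq_sum_sum_snoc {α β : Type*} [AddCommMonoid β] {r : ℕ}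
    {s : Finset (Fin (r + 1) → α)} {t : Finset α} {u : α → Finset (Fin r → α)}
    (hs : ∀ a g, Fin.snoc g a ∈ s ↔ a ∈ t ∧ g ∈ u a) (w : (Fin (r + 1) → α) → β) :
    ∑ f ∈ s, w f = ∑ a ∈ t, ∑ g ∈ u a, w (Fin.snoc g a) := by
  rw [← sum_sigma t u fun x => w (Fin.snoc x.2 x.1)]
  refine sum_nbij' (fun f => ⟨f (Fin.last r), Fin.init f⟩) (fun x => Fin.snoc x.2 x.1)
    (fun f hf => ?_) (fun x hx => ?_) (fun f _ => Fin.snoc_init_self f) (fun x _ => ?_)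
    (fun f _ => by rw [Fin.snoc_init_self])
  · rw [← Fin.snoc_init_self f, hs] at hf
    simpa using hf
  · simpa [hs] using hx
  · simp

open Classical in
noncomputable def strictChains (r M : ℕ) : Finset (Fin r → ℕ) :=
  {g ∈ Fintype.piFinset fun _ => Ico 1 M | StrictMono g}

open Classical in
noncomputable def monoChains (q M : ℕ) : Finset (Fin q → ℕ) :=
  {g ∈ Fintype.piFinset fun _ => Icc 1 M | Monotone g}

lemma snoc_mem_strictChains_iff {r M j : ℕ} {g : Fin r → ℕ} :
    Fin.snoc g j ∈ strictChains (r + 1) M ↔ j ∈ Ico 1 M ∧ g ∈ strictChains r j := by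
  simp only [strictChains, mem_filter, Fintype.mem_piFinset, strictMono_snoc_iff,
    Fin.forall_fin_succ', Fin.snoc_castSucc, Fin.snoc_last, mem_Ico]
  constructor
  · rintro ⟨⟨hg, hj⟩, hmono, hlt⟩
    exact ⟨hj, fun i => ⟨(hg i).1, hlt i⟩, hmono⟩
  · rintro ⟨hj, hg, hmono⟩
    exact ⟨⟨fun i => ⟨(hg i).1, (hg i).2.trans hj.2⟩, hj⟩, hmono, fun i => (hg i).2⟩

lemma snoc_mem_monoChains_iff {q M j : ℕ} {g : Fin q → ℕ} :
    Fin.snoc g j ∈ monoChains (q + 1) M ↔ j ∈ Icc 1 M ∧ g ∈ monoChains q j := by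
  simp only [monoChains, mem_filter, Fintype.mem_piFinset, monotone_snoc_iff,
    Fin.forall_fin_succ', Fin.snoc_castSucc, Fin.snoc_last, mem_Icc]
  constructor
  · rintro ⟨⟨hg, hj⟩, hmono, hle⟩
    exact ⟨hj, fun i => ⟨(hg i).1, hle i⟩, hmono⟩
  · rintro ⟨hj, hg, hmono⟩
    exact ⟨⟨fun i => ⟨(hg i).1, (hg i).2.trans hj.2⟩, hj⟩, hmono, fun i => (hg i).2⟩

lemma sum_strictChains (r M : ℕ) :
    ∑ g ∈ strictChains r M, ∏ i, (g i : ℝ)⁻¹ = strictChainSum r M := by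
  induction r generalizing M with
  | zero => simp [strictChains, strictChainSum, Subsingleton.strictMono]
  | succ r ih =>
    rw [sum_eq_sum_sum_snoc (fun _ _ => snoc_mem_strictChains_iff), strictChainSum]
    refine sum_congr rfl fun j _ => ?_
    simp only [Fin.prod_univ_castSucc, Fin.snoc_castSucc, Fin.snoc_last, ← sum_mul, ih]
    rfl

lemma sum_monoChains (q M : ℕ) :
    ∑ g ∈ monoChains q M, ∏ i, (g i : ℝ)⁻¹ = monoChainSum q M := by
  induction q generalizing M with
  | zero => simp [monoChains, monoChainSum, Subsingleton.monotone]
  | succ q ih =>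
    rw [sum_eq_sum_sum_snoc (fun _ _ => snoc_mem_monoChains_iff), monoChainSum]
    refine sum_congr rfl fun j _ => ?_
    simp only [Fin.prod_univ_castSucc, Fin.snoc_castSucc, Fin.snoc_last, ← sum_mul, ih]
    rfl

lemma strictMono_snoc_and_pos_iff {r M : ℕ} {g : Fin r → ℕ} :
    (StrictMono (Fin.snoc g M : Fin (r + 1) → ℕ) ∧ ∀ i, 0 < (Fin.snoc g M : Fin (r + 1) → ℕ) i) ↔
      0 < M ∧ g ∈ strictChains r M := by
  simp only [strictChains, mem_filter, Fintype.mem_piFinset, strictMono_snoc_iff,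
    Fin.forall_fin_succ', Fin.snoc_castSucc, Fin.snoc_last, mem_Ico]
  constructor
  · rintro ⟨⟨hmono, hlt⟩, hpos, hM⟩
    exact ⟨hM, fun i => ⟨hpos i, hlt i⟩, hmono⟩
  · rintro ⟨hM, hg, hmono⟩
    exact ⟨⟨hmono, fun i => (hg i).2⟩, fun i => (hg i).1, hM⟩

lemma mem_monoChains {q M : ℕ} {h : Fin q → ℕ} :
    h ∈ monoChains q M ↔ Monotone h ∧ (∀ j, 0 < h j) ∧ ∀ j, h j ≤ M := by
  simp only [monoChains, mem_filter, Fintype.mem_piFinset, mem_Icc, forall_and]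
  tauto

lemma tsum_eq_tsum_of_hasSum_fiberwise {β γ : Type*} {f : β → ℝ} (hf : 0 ≤ f) (π : β → γ)
    {g : γ → ℝ} (hfib : ∀ c, HasSum (fun b : π ⁻¹' {c} => f b) (g c)) (hg : Summable g) :
    ∑' b, f b = ∑' c, g c := by
  have hsum : Summable f := (summable_partition hf (s := fun c => π ⁻¹' {c})
    (fun b => ⟨π b, rfl, fun _ hc => hc.symm⟩)).2
    ⟨fun c => (hfib c).summable, by simpa only [(hfib _).tsum_eq] using hg⟩
  exact (hsum.hasSum.tsum_fiberwise π).tsum_eq.symm.trans (tsum_congr fun c => (hfib c).tsum_eq)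

abbrev GIndex (r q : ℕ) :=
  {fg : (Fin (r + 1) → ℕ) × (Fin q → ℕ) //
    StrictMono fg.1 ∧ (∀ i, 0 < fg.1 i) ∧ Monotone fg.2 ∧
      (∀ j, 0 < fg.2 j) ∧ ∀ j, fg.2 j ≤ fg.1 (Fin.last r)}

lemma G_eq_tsum (n r q : ℕ)
    (hsum : Summable fun M : ℕ => strictChainSum r M * monoChainSum q M / (M : ℝ) ^ (n + 2)) :
    G n r q = ∑' M : ℕ, strictChainSum r M * monoChainSum q M / (M : ℝ) ^ (n + 2) := by
  set top : GIndex r q → ℕ := fun x => x.1.1 (Fin.last r)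
  rw [G]
  refine tsum_eq_tsum_of_hasSum_fiberwise (fun x => by positivity) top (fun M => ?_) hsum
  rcases Nat.eq_zero_or_pos M with rfl | hM
  · have : IsEmpty (top ⁻¹' {0}) := ⟨fun x => (x.1.2.2.1 _).ne' x.2⟩
    simp
  let e : (strictChains r M ×ˢ monoChains q M : Finset _) ≃ top ⁻¹' {M} :=
    { toFun := fun p => ⟨⟨(Fin.snoc p.1.1 M, p.1.2), by
          obtain ⟨hg, hh⟩ := mem_product.1 p.2
          obtain ⟨hmono, hpos⟩ := strictMono_snoc_and_pos_iff.2 ⟨hM, hg⟩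
          simpa [hmono, hpos] using mem_monoChains.1 hh⟩, by simp [top]⟩
      invFun := fun x => ⟨(Fin.init x.1.1.1, x.1.1.2), by
          obtain ⟨⟨⟨f, h⟩, hf, hpos, hh⟩, hfM : f (Fin.last r) = M⟩ := x
          dsimp only at hf hpos hh ⊢
          rw [← Fin.snoc_init_self f, hfM] at hf hpos
          rw [hfM] at hh
          exact mem_product.2 ⟨(strictMono_snoc_and_pos_iff.1 ⟨hf, hpos⟩).2, mem_monoChains.2 hh⟩⟩
      left_inv := fun p => by simp
      right_inv := fun x => by
        obtain ⟨⟨⟨f, h⟩, hf⟩, hfM : f (Fin.last r) = M⟩ := x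
        simp [← hfM, Fin.snoc_init_self] }
  rw [← e.hasSum_iff]
  convert hasSum_fintype (β := (strictChains r M ×ˢ monoChains q M : Finset _)) _ using 1
  calc strictChainSum r M * monoChainSum q M / (M : ℝ) ^ (n + 2)
      = ∑ p ∈ strictChains r M ×ˢ monoChains q M,
          (∏ i, (p.1 i : ℝ)⁻¹) * ((M : ℝ) ^ (n + 2))⁻¹ * ∏ j, (p.2 j : ℝ)⁻¹ := by
        rw [sum_product, ← sum_strictChains, ← sum_monoChains, sum_mul_sum, sum_div]
        refine sum_congr rfl fun g _ => ?_
        rw [sum_div]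
        exact sum_congr rfl fun h _ => by ring
    _ = _ := by
        rw [← sum_coe_sort]
        simp [e]

lemma mzv_snoc_ones_eq_G (r a : ℕ) : mzv (Fin.snoc (ones r) (a + 2)) = G a r 0 := by
  let e : {f : Fin (r + 1) → ℕ // StrictMono f ∧ ∀ i, 0 < f i} ≃ GIndex r 0 :=
    { toFun := fun f => ⟨(f.1, Fin.elim0), f.2.1, f.2.2, fun i => i.elim0, fun i => i.elim0,
        fun i => i.elim0⟩
      invFun := fun x => ⟨x.1.1, x.2.1, x.2.2.1⟩
      left_inv := fun f => rfl
      right_inv := fun x => Subtype.ext (Prod.ext rfl (funext fun i => i.elim0)) }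
  rw [mzv, G, ← e.tsum_eq]
  exact tsum_congr fun f => by simp [e, Fin.prod_univ_castSucc, ones, mul_comm]

lemma hasSum_strictChainSum_div_pow (r a : ℕ) :
    HasSum (fun M : ℕ => strictChainSum r M / (M : ℝ) ^ (a + 2))
      (mzv (Fin.snoc (ones r) (a + 2))) := by
  have hsum := summable_strictChainSum_div_pow r (n := a + 2) (by omega)
  rw [mzv_snoc_ones_eq_G, G_eq_tsum]
  · simpa [monoChainSum] using hsum.hasSum
  · simpa [monoChainSum] using hsum

lemma sum_Icc_one_eq_sum_range {β : Type*} [AddCommMonoid β] (f : ℕ → β) (M : ℕ) :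
    ∑ j ∈ Icc 1 M, f j = ∑ m ∈ range M, f (m + 1) := by
  induction M with
  | zero => simp
  | succ M ih => rw [sum_Icc_succ_top (by omega), sum_range_succ, ih]

lemma hasSum_sub_succ_of_antitone {u : ℕ → ℝ} (hu : Antitone u) (hlim : Tendsto u atTop (𝓝 0)) :
    HasSum (fun n => u n - u (n + 1)) (u 0) := by
  rw [hasSum_iff_tendsto_nat_of_nonneg fun n => sub_nonneg.2 (hu n.le_succ)]
  simp_rw [sum_range_sub']
  simpa using hlim.const_sub (u 0)

lemma hasSum_tail_inv_mul_add (j : ℕ) {M : ℕ} (hM : 0 < M) :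
    HasSum (fun n : ℕ => ((n + j + 1 : ℝ) * (n + j + 1 + M))⁻¹)
      ((∑ m ∈ range M, (j + m + 1 : ℝ)⁻¹) / M) := by
  -- `1/(N(N+M)) = (1/M)(1/N - 1/(N+M))` telescopes against the window sums `u n`
  set u : ℕ → ℝ := fun n => (∑ m ∈ range M, (n + j + m + 1 : ℝ)⁻¹) / M
  have hu : Antitone u := antitone_nat_of_succ_le fun n => by
    simp only [u]
    gcongr with m
    linarith
  have hlim : Tendsto u atTop (𝓝 0) := by
    have h := (tendsto_finsetSum (range M) fun m _ => tendsto_inv_atTop_zero.comp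
      (tendsto_atTop_add_const_right _ (j + m + 1 : ℝ) tendsto_natCast_atTop_atTop)).div_const
        (M : ℝ)
    simpa [u, add_assoc] using h
  have hdiff : ∀ n : ℕ, u n - u (n + 1) = ((n + j + 1 : ℝ) * (n + j + 1 + M))⁻¹ := by
    intro n
    have h := sum_range_sub' (fun m : ℕ => ((n : ℝ) + j + m + 1)⁻¹) M
    simp only [u, ← sub_div, ← sum_sub_distrib]
    push_cast at h ⊢
    rw [show ∑ m ∈ range M, (((n : ℝ) + j + m + 1)⁻¹ - ((n : ℝ) + 1 + j + m + 1)⁻¹) =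
      ∑ m ∈ range M, (((n : ℝ) + j + m + 1)⁻¹ - ((n : ℝ) + j + (m + 1) + 1)⁻¹) from
        sum_congr rfl fun m _ => by ring_nf, h]
    have hM' : (0 : ℝ) < M := by exact_mod_cast hM
    field_simp
    ring
  convert hasSum_sub_succ_of_antitone hu hlim using 1
  · exact (funext hdiff).symm
  · simp [u]

lemma hasSum_sum_range_mul {c w t : ℕ → ℝ} (hc : 0 ≤ c) (hw : 0 ≤ w)
    (ht : ∀ j, HasSum (fun n => w (n + j + 1)) (t j)) (hct : Summable fun j => c j * t j) :
    HasSum (fun N => (∑ j ∈ range N, c j) * w N) (∑' j, c j * t j) := by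
  set F : ℕ × ℕ → ℝ := fun p => c p.1 * w (p.2 + p.1 + 1)
  have hrow : ∀ j, HasSum (fun n => F (j, n)) (c j * t j) := fun j => (ht j).mul_left (c j)
  have hF : Summable F := (summable_prod_of_nonneg fun p => mul_nonneg (hc _) (hw _)).2
    ⟨fun j => (hrow j).summable, hct.congr fun j => (hrow j).tsum_eq.symm⟩
  have hF' : HasSum F (∑' j, c j * t j) :=
    (hF.tsum_prod' fun j => (hrow j).summable).trans (tsum_congr fun j => (hrow j).tsum_eq) ▸
      hF.hasSum
  -- regroup `F` along the antidiagonals `j + n = N`, on which `w` is constant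
  have hdiag := (HasAntidiagonal.sigmaAntidiagonalEquivProd.hasSum_iff.2 hF').sigma
    fun N => hasSum_fintype _
  have hshift : HasSum (fun N => (∑ j ∈ range (N + 1), c j) * w (N + 1)) (∑' j, c j * t j) := by
    convert hdiag using 2 with N
    change _ = ∑ p : antidiagonal N, F p
    rw [sum_coe_sort (antidiagonal N) fun p => F p, Nat.sum_antidiagonal_eq_sum_range_succ
      (fun j n => c j * w (n + j + 1)), sum_mul]
    exact sum_congr rfl fun j hj => by rw [Nat.sub_add_cancel (Nat.lt_succ_iff.1 (mem_range.1 hj))]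
  simpa using (hasSum_nat_add_iff' 1).1 (by simpa using hshift)

lemma hasSum_strictChainSum_div_mul_add (r : ℕ) {M : ℕ} (hM : 0 < M) :
    HasSum (fun N : ℕ => strictChainSum r N / (N * (N + M))) (monoChainSum (r + 1) M / M) := by
  induction r generalizing M with
  | zero =>
    rw [← hasSum_nat_add_iff' 1]
    simpa [strictChainSum, monoChainSum, sum_Icc_one_eq_sum_range, add_comm]
      using hasSum_tail_inv_mul_add 0 hM
  | succ r ih =>
    have hstep : HasSum
        (fun j : ℕ => strictChainSum r j / j * ((∑ m ∈ range M, (j + m + 1 : ℝ)⁻¹) / M))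
        (monoChainSum (r + 2) M / M) := by
      have h := (hasSum_sum fun m (_ : m ∈ range M) => ih (M := m + 1) m.succ_pos).div_const (M : ℝ)
      have hsum : monoChainSum (r + 2) M =
          ∑ m ∈ range M, monoChainSum (r + 1) (m + 1) / ((m + 1 : ℕ) : ℝ) :=
        sum_Icc_one_eq_sum_range _ M
      rw [hsum]
      refine h.congr_fun fun j => ?_
      rw [mul_div_assoc', mul_sum, sum_div, sum_div]
      refine sum_congr rfl fun m _ => ?_
      push_cast
      simp only [div_eq_mul_inv, mul_inv]
      ring
    have h := hasSum_sum_range_mul (c := fun j => strictChainSum r j / j)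
      (w := fun N => ((N : ℝ) * (N + M))⁻¹) (fun j => div_nonneg (strictChainSum_nonneg r j)
        j.cast_nonneg) (fun N => by positivity)
      (fun j => by simpa using hasSum_tail_inv_mul_add j hM) hstep.summable
    rw [hstep.tsum_eq] at h
    convert h using 2 with N
    rw [strictChainSum, div_eq_mul_inv]
    congr 1
    refine sum_subset (fun j hj => mem_range.2 (mem_Ico.1 hj).2) fun j hj hj' => ?_
    obtain rfl : j = 0 := by simp only [mem_range, mem_Ico] at hj hj'; omega
    simp

lemma sum_antidiagonal_neg_one_pow_div {K : Type*} [Field K] (k : ℕ) {x y : K}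
    (hxy : x + y ≠ 0) :
    ∑ ab ∈ antidiagonal k, (-1) ^ ab.2 / (x ^ (ab.1 + 2) * y ^ (ab.2 + 2)) =
      1 / (x ^ (k + 2) * (y * (y + x))) + (-1) ^ k / (y ^ (k + 2) * (x * (x + y))) := by
  rcases eq_or_ne x 0 with rfl | hx
  · simp
  rcases eq_or_ne y 0 with rfl | hy
  · simp
  have hyx : y + x ≠ 0 := by rwa [add_comm]
  induction k with
  | zero =>
    simp only [HasAntidiagonal.antidiagonal_zero, sum_singleton]
    field_simp
    ring
  | succ k ih =>
    rw [Nat.antidiagonal_succ', sum_cons, sum_map]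
    have hterm : ∀ ab ∈ antidiagonal k,
        (-1 : K) ^ (ab.2 + 1) / (x ^ (ab.1 + 2) * y ^ (ab.2 + 1 + 2)) =
          -((-1) ^ ab.2 / (x ^ (ab.1 + 2) * y ^ (ab.2 + 2))) / y := fun ab _ => by
      field_simp
      ring
    simp only [Function.Embedding.coe_prodMap, Function.Embedding.coeFn_mk, Prod.map_fst,
      Prod.map_snd, Function.Embedding.refl_apply, Nat.succ_eq_add_one]
    rw [sum_congr rfl hterm, ← sum_div, sum_neg_distrib, ih]
    field_simp
    ring

lemma sum_antidiagonal_mul_div_pow (k : ℕ) (A B : ℝ) (M N : ℕ) :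
    ∑ ab ∈ antidiagonal k, (-1) ^ ab.2 * (A / (M : ℝ) ^ (ab.1 + 2) * (B / (N : ℝ) ^ (ab.2 + 2))) =
      A / (M : ℝ) ^ (k + 2) * (B / (N * (N + M))) +
        (-1) ^ k * (B / (N : ℝ) ^ (k + 2) * (A / (M * (M + N)))) := by
  rcases eq_or_ne ((M : ℝ) + N) 0 with h | h
  · obtain ⟨rfl, rfl⟩ : M = 0 ∧ N = 0 := by constructor <;> · norm_cast at h; omega
    simp
  calc _ = A * B * ∑ ab ∈ antidiagonal k,
        (-1) ^ ab.2 / ((M : ℝ) ^ (ab.1 + 2) * (N : ℝ) ^ (ab.2 + 2)) := by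
        rw [mul_sum]
        exact sum_congr rfl fun _ _ => by ring
    _ = _ := by
        rw [sum_antidiagonal_neg_one_pow_div k h]
        simp only [div_eq_mul_inv, mul_inv]
        ring

lemma hasSum_G_double_series (k r s : ℕ) :
    HasSum (fun MN : ℕ × ℕ => strictChainSum r MN.1 / (MN.1 : ℝ) ^ (k + 2) *
      (strictChainSum s MN.2 / (MN.2 * (MN.2 + MN.1)))) (G (k + 1) r (s + 1)) := by
  have hrow : ∀ M : ℕ, HasSum (fun N : ℕ => strictChainSum r M / (M : ℝ) ^ (k + 2) *
      (strictChainSum s N / (N * (N + M))))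
      (strictChainSum r M * monoChainSum (s + 1) M / (M : ℝ) ^ (k + 1 + 2)) := by
    intro M
    rcases Nat.eq_zero_or_pos M with rfl | hM
    · simp
    have h := (hasSum_strictChainSum_div_mul_add s hM).mul_left
      (strictChainSum r M / (M : ℝ) ^ (k + 2))
    rwa [div_mul_div_comm, ← pow_succ] at h
  have hsum := summable_strictChainSum_mul_monoChainSum_div_pow r (s + 1) (n := k + 1 + 2)
    (by omega)
  have hK : Summable fun MN : ℕ × ℕ => strictChainSum r MN.1 / (MN.1 : ℝ) ^ (k + 2) *
      (strictChainSum s MN.2 / (MN.2 * (MN.2 + MN.1))) :=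
    (summable_prod_of_nonneg fun MN => by
        have := strictChainSum_nonneg r MN.1; have := strictChainSum_nonneg s MN.2; positivity).2
      ⟨fun M => (hrow M).summable, hsum.congr fun M => (hrow M).tsum_eq.symm⟩
  rw [G_eq_tsum _ _ _ hsum, (hK.hasSum.prod_fiberwise hrow).tsum_eq]
  exact hK.hasSum

lemma hasSum_mzv_mul_mzv (r s a b : ℕ) :
    HasSum (fun MN : ℕ × ℕ => strictChainSum r MN.1 / (MN.1 : ℝ) ^ (a + 2) *
      (strictChainSum s MN.2 / (MN.2 : ℝ) ^ (b + 2)))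
      (mzv (Fin.snoc (ones r) (a + 2)) * mzv (Fin.snoc (ones s) (b + 2))) := by
  have ha := hasSum_strictChainSum_div_pow r a
  have hb := hasSum_strictChainSum_div_pow s b
  have hs := ha.summable.mul_of_nonneg hb.summable
    (fun M => div_nonneg (strictChainSum_nonneg r M) (by positivity))
    (fun N => div_nonneg (strictChainSum_nonneg s N) (by positivity))
  exact ha.mul hb hs

theorem stmt2 (p q k : ℕ) (hp : 0 < p) (hq : 0 < q) :
    G (k + 1) (p - 1) q + (-1 : ℝ) ^ k * G (k + 1) (q - 1) p =
      ∑ ab ∈ Finset.HasAntidiagonal.antidiagonal k,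
        (-1 : ℝ) ^ ab.2 * mzv (Fin.snoc (ones (p - 1)) (ab.1 + 2)) *
          mzv (Fin.snoc (ones (q - 1)) (ab.2 + 2)) := by
  obtain ⟨r, rfl⟩ : ∃ r, p = r + 1 := ⟨p - 1, by omega⟩
  obtain ⟨s, rfl⟩ : ∃ s, q = s + 1 := ⟨q - 1, by omega⟩
  have hswap := (Equiv.prodComm ℕ ℕ).hasSum_iff.2 (hasSum_G_double_series k s r)
  have hlhs := (hasSum_G_double_series k r s).add (hswap.mul_left ((-1 : ℝ) ^ k))
  have hrhs := hasSum_sum fun ab (_ : ab ∈ antidiagonal k) =>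
    (hasSum_mzv_mul_mzv r s ab.1 ab.2).mul_left ((-1 : ℝ) ^ ab.2)
  -- `r + 1 - 1` is `r` only up to unfolding, since it occurs in the type of `Fin.snoc`
  refine (hlhs.unique (hrhs.congr_fun fun MN => ?_)).trans
    (sum_congr rfl fun (ab : ℕ × ℕ) _ => (mul_assoc ((-1 : ℝ) ^ ab.2) _ _).symm)
  exact (sum_antidiagonal_mul_div_pow k _ _ MN.1 MN.2).symm
end

section
/- For integers n≥0 and s,r≥2, one has Σ_{a+b=n} ζ*({s}^a)·ζ(sb+r) = Σ_{a+b=n} ζ*({s}^a, r, {s}^b), where the sums are over nonnegative integers a,b with a+b=n. -/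
open scoped BigOperators

/-!
Write `ζ*_S` for the zeta-star sum, valued in `ℝ≥0∞`, over monotone tuples with entries in `S`.
Cutting a tuple where its entries pass a threshold `M` gives
`ζ*_S({s}^a) = ∑_{i+j=a} ζ*_{S ∩ [0,M]}({s}^i) ζ*_{S ∩ (M,∞)}({s}^j)`, and fixing the middle entry
`m` gives `ζ*({s}^a, r, {s}^b) = ∑_m m^{-r} ζ*_{[1,m]}({s}^a) ζ*_{[m,∞)}({s}^b)`. Cutting
`ζ*({s}^a)` and `ζ*_{[m,∞)}({s}^b)` at `m`, both sides of the theorem become `∑_m m^{-r} [t^n] BCX`,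
where `B`, `C` and `X` are the generating series of `ζ*_{[1,m]}({s}^i)`, `ζ*_{(m,∞)}({s}^j)` and
`m^{-si}`. For `s, r ≥ 2` everything is finite, so the identity descends to `ℝ`.
-/

open scoped ENNReal
open Finset.HasAntidiagonal (antidiagonal mem_antidiagonal)
open Set (Ioi Ici Iic)

theorem Fin.monotone_append_iff {α : Type*} [Preorder α] {m n : ℕ} {g : Fin m → α}
    {h : Fin n → α} :
    Monotone (Fin.append g h) ↔ Monotone g ∧ Monotone h ∧ ∀ i j, g i ≤ h j := by
  refine ⟨fun hgh => ⟨fun i j hij => ?_, fun i j hij => ?_, fun i j => ?_⟩, ?_⟩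
  · simpa only [Fin.append_left] using hgh ((Fin.strictMono_castAdd n).monotone hij)
  · simpa only [Fin.append_right] using hgh ((Fin.strictMono_natAdd m).monotone hij)
  · simpa only [Fin.append_left, Fin.append_right] using
      hgh (show Fin.castAdd n i ≤ Fin.natAdd m j from
        Fin.le_iff_val_le_val.2 (by simp only [Fin.val_castAdd, Fin.val_natAdd]; omega))
  · rintro ⟨hg, hh, hgh⟩ x y hxy
    induction x using Fin.addCases <;> induction y using Fin.addCases
    all_goals simp only [Fin.append_left, Fin.append_right]
    · exact hg ((Fin.strictMono_castAdd n).le_iff_le.1 hxy)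
    · exact hgh _ _
    · simp only [Fin.le_iff_val_le_val, Fin.val_natAdd, Fin.val_castAdd] at hxy
      omega
    · exact hh ((Fin.strictMono_natAdd m).le_iff_le.1 hxy)

theorem Fin.exists_le_iff_lt_of_monotone {α : Type*} [LinearOrder α] {a : ℕ} {f : Fin a → α}
    (hf : Monotone f) (M : α) : ∃ p ≤ a, ∀ i : Fin a, f i ≤ M ↔ (i : ℕ) < p := by
  classical
  have hP : ∃ p, p = a ∨ ∃ h : p < a, M < f ⟨p, h⟩ := ⟨a, Or.inl rfl⟩
  refine ⟨Nat.find hP, Nat.find_min' hP (Or.inl rfl), fun i => ⟨fun hi => ?_, fun hi => ?_⟩⟩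
  · by_contra! hle
    obtain h | ⟨h, hM⟩ := Nat.find_spec hP
    · omega
    · exact (hM.trans_le (hf (show ⟨_, h⟩ ≤ i from hle))).not_ge hi
  · have := Nat.find_min hP hi
    push Not at this
    exact this.2 i.2

theorem ENNReal.tsum_prod_mul {X Y : Type*} (u : X → ℝ≥0∞) (v : Y → ℝ≥0∞) :
    ∑' p : X × Y, u p.1 * v p.2 = (∑' x, u x) * ∑' y, v y := by
  rw [ENNReal.tsum_prod']
  simp only [ENNReal.tsum_mul_left, ENNReal.tsum_mul_right]

theorem sum_antidiagonal_mul_assoc_comm {R : Type*} [CommSemiring R] (f g h : ℕ → R) (n : ℕ) :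
    ∑ p ∈ antidiagonal n, (∑ q ∈ antidiagonal p.1, f q.1 * g q.2) * h p.2 =
      ∑ p ∈ antidiagonal n, f p.1 * ∑ q ∈ antidiagonal p.2, h q.1 * g q.2 := by
  have := congrArg (PowerSeries.coeff n) (show
    PowerSeries.mk f * PowerSeries.mk g * PowerSeries.mk h =
      PowerSeries.mk f * (PowerSeries.mk h * PowerSeries.mk g) by ring)
  simpa only [PowerSeries.coeff_mul, PowerSeries.coeff_mk] using this

namespace ZetaStar

abbrev MonoTuple (k : ℕ) (S : Set ℕ) : Type :=
  {f : Fin k → ℕ // Monotone f ∧ ∀ i, f i ∈ S}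

noncomputable def weight {k : ℕ} (α f : Fin k → ℕ) : ℝ≥0∞ :=
  ∏ i, ((f i : ℝ≥0∞) ^ α i)⁻¹

/-- `ζ*(α)` with all summation variables in `S`, valued in `ℝ≥0∞` so that the series can be
rearranged freely. -/
noncomputable def mzsOn (S : Set ℕ) {k : ℕ} (α : Fin k → ℕ) : ℝ≥0∞ :=
  ∑' f : MonoTuple k S, weight α f.1

lemma weight_append {m n : ℕ} (α f : Fin m → ℕ) (β g : Fin n → ℕ) :
    weight (Fin.append α β) (Fin.append f g) = weight α f * weight β g := by
  simp [weight, Fin.prod_univ_add]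

lemma weight_const_append {m n : ℕ} (s : ℕ) (f : Fin m → ℕ) (g : Fin n → ℕ) :
    weight (fun _ => s) (Fin.append f g) = weight (fun _ => s) f * weight (fun _ => s) g := by
  simp [weight, Fin.prod_univ_add]

lemma weight_comp_cast {m n : ℕ} (h : m = n) (s : ℕ) (f : Fin n → ℕ) :
    weight (fun _ => s) (f ∘ Fin.cast h) = weight (fun _ => s) f :=
  Fin.prod_congr' (fun i => ((f i : ℝ≥0∞) ^ s)⁻¹) h

lemma mzsOn_mono {S T : Set ℕ} (hST : S ⊆ T) {k : ℕ} (α : Fin k → ℕ) :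
    mzsOn S α ≤ mzsOn T α :=
  ENNReal.tsum_comp_le_tsum_of_injective
    (f := fun f : MonoTuple k S => (⟨f.1, f.2.1, fun i => hST (f.2.2 i)⟩ : MonoTuple k T))
    (fun _ _ h => Subtype.ext (congrArg Subtype.val h :)) (fun f => weight α f.1)

lemma mzsOn_eq_weight_of_forall_eq {S : Set ℕ} {k : ℕ} (α : Fin k → ℕ) (c : MonoTuple k S)
    (hc : ∀ f, f = c) : mzsOn S α = weight α c.1 :=
  tsum_eq_single c fun f hf => (hf (hc f)).elim

lemma mzsOn_fin_zero (S : Set ℕ) (α : Fin 0 → ℕ) : mzsOn S α = 1 := by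
  rw [mzsOn_eq_weight_of_forall_eq α ⟨Fin.elim0, fun i => i.elim0, fun i => i.elim0⟩
    fun f => Subtype.ext (funext fun i => i.elim0)]
  simp [weight]

lemma mzsOn_singleton_const (m s k : ℕ) :
    mzsOn ({m} : Set ℕ) (fun _ : Fin k => s) = ((m : ℝ≥0∞) ^ s)⁻¹ ^ k := by
  rw [mzsOn_eq_weight_of_forall_eq (S := {m}) _ ⟨fun _ => m, monotone_const, fun _ => rfl⟩
    fun f => Subtype.ext (funext fun i => f.2.2 i)]
  simp [weight]

section Insertion

variable (S : Set ℕ) (a b : ℕ)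

lemma monotone_append_singleton_append {g : Fin a → ℕ} {h : Fin b → ℕ} {m : ℕ}
    (hg : Monotone g) (hh : Monotone h) (hgm : ∀ i, g i ≤ m) (hmh : ∀ j, m ≤ h j) :
    Monotone (Fin.append (Fin.append g ![m]) h) := by
  have hgm' : ∀ i, Fin.append g ![m] i ≤ m := by simpa [Fin.forall_fin_add] using hgm
  refine Fin.monotone_append_iff.2 ⟨Fin.monotone_append_iff.2 ⟨hg, Subsingleton.monotone _,
    fun i j => ?_⟩, hh, fun i j => (hgm' i).trans (hmh j)⟩
  simpa [Fin.fin_one_eq_zero j] using hgm i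

def insertMid (x : Σ m : S, MonoTuple a (S ∩ Iic m) × MonoTuple b (S ∩ Ici m)) :
    MonoTuple (a + 1 + b) S :=
  ⟨Fin.append (Fin.append x.2.1.1 ![x.1.1]) x.2.2.1,
    monotone_append_singleton_append a b x.2.1.2.1 x.2.2.2.1 (fun i => (x.2.1.2.2 i).2)
      (fun j => (x.2.2.2.2 j).2),
    by simp [Fin.forall_fin_add, x.1.2, fun i => (x.2.1.2.2 i).1, fun j => (x.2.2.2.2 j).1]⟩

lemma insertMid_injective : Function.Injective (insertMid S a b) := by
  rintro ⟨m, g, h⟩ ⟨m', g', h'⟩ heq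
  have hf : Fin.append (Fin.append g.1 ![m.1]) h.1 = Fin.append (Fin.append g'.1 ![m'.1]) h'.1 :=
    congrArg Subtype.val heq
  obtain rfl : m = m' :=
    Subtype.ext (by simpa using congrFun hf (Fin.castAdd b (Fin.natAdd a 0)))
  obtain rfl : g = g' :=
    Subtype.ext (funext fun i => by simpa using congrFun hf (Fin.castAdd b (Fin.castAdd 1 i)))
  obtain rfl : h = h' :=
    Subtype.ext (funext fun j => by simpa using congrFun hf (Fin.natAdd (a + 1) j))
  rfl

lemma insertMid_surjective : Function.Surjective (insertMid S a b) := by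
  intro f
  set mid : Fin (a + 1 + b) := Fin.castAdd b (Fin.natAdd a 0)
  have hle (i j : Fin (a + 1 + b)) (hij : (i : ℕ) ≤ j) : f.1 i ≤ f.1 j := f.2.1 hij
  refine ⟨⟨⟨f.1 mid, f.2.2 mid⟩,
    ⟨fun i => f.1 (Fin.castAdd b (Fin.castAdd 1 i)), fun i j hij => hle _ _ (by simpa using hij),
      fun i => ⟨f.2.2 _, hle _ _ (by simp [mid])⟩⟩,
    ⟨fun j => f.1 (Fin.natAdd (a + 1) j), fun i j hij => hle _ _ (by simpa using hij),
      fun j => ⟨f.2.2 _, hle _ _ (show a ≤ a + 1 + j by omega)⟩⟩⟩, Subtype.ext ?_⟩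
  have hmid : ![f.1 mid] = fun i => f.1 (Fin.castAdd b (Fin.natAdd a i)) :=
    funext fun i => by simp [mid, Fin.fin_one_eq_zero i]
  change Fin.append (Fin.append _ ![f.1 mid]) _ = f.1
  rw [hmid, Fin.append_castAdd_natAdd (f := fun i => f.1 (Fin.castAdd b i)),
    Fin.append_castAdd_natAdd]

lemma mzsOn_append_singleton_append (α : Fin a → ℕ) (r : ℕ) (β : Fin b → ℕ) :
    mzsOn S (Fin.append (Fin.append α ![r]) β) =
      ∑' m : S, mzsOn (S ∩ Iic m) α * ((m : ℝ≥0∞) ^ r)⁻¹ * mzsOn (S ∩ Ici m) β := by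
  rw [mzsOn, ← (Equiv.ofBijective _
    ⟨insertMid_injective S a b, insertMid_surjective S a b⟩).tsum_eq, ENNReal.tsum_sigma']
  refine tsum_congr fun m => ?_
  calc _ = ∑' x : MonoTuple a (S ∩ Iic m) × MonoTuple b (S ∩ Ici m),
        ((m : ℝ≥0∞) ^ r)⁻¹ * (weight α x.1.1 * weight β x.2.1) := by
        refine tsum_congr fun x => ?_
        change weight _ (insertMid S a b ⟨m, x⟩).1 = _
        simp only [insertMid, weight_append]
        simp only [weight, Finset.univ_unique, Fin.default_eq_zero, Matrix.cons_val_fin_one,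
          Finset.prod_singleton]
        ring
    _ = _ := by
        rw [ENNReal.tsum_mul_left, ENNReal.tsum_prod_mul (fun g : MonoTuple a _ => weight α g.1)
          (fun h : MonoTuple b _ => weight β h.1), mzsOn, mzsOn]
        ring

end Insertion

section Split

variable (S : Set ℕ) (M a : ℕ)

def appendThreshold
    (x : Σ pq : antidiagonal a, MonoTuple pq.1.1 (S ∩ Iic M) × MonoTuple pq.1.2 (S ∩ Ioi M)) :
    MonoTuple a S :=
  ⟨Fin.append x.2.1.1 x.2.2.1 ∘ Fin.cast (mem_antidiagonal.1 x.1.2).symm,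
    (Fin.monotone_append_iff.2 ⟨x.2.1.2.1, x.2.2.2.1,
      fun i j => le_trans (x.2.1.2.2 i).2 (le_of_lt (x.2.2.2.2 j).2)⟩).comp
      (Fin.cast_strictMono _).monotone,
    fun i => (Fin.forall_fin_add fun j => Fin.append x.2.1.1 x.2.2.1 j ∈ S).2
      ⟨fun j => by simpa using (x.2.1.2.2 j).1, fun j => by simpa using (x.2.2.2.2 j).1⟩ _⟩

lemma appendThreshold_le_iff
    (x : Σ pq : antidiagonal a, MonoTuple pq.1.1 (S ∩ Iic M) × MonoTuple pq.1.2 (S ∩ Ioi M))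
    (i : Fin a) : (appendThreshold S M a x).1 i ≤ M ↔ (i : ℕ) < x.1.1.1 := by
  obtain ⟨⟨pq, hpq⟩, g, h⟩ := x
  obtain ⟨j, rfl⟩ : ∃ j, Fin.cast (mem_antidiagonal.1 hpq) j = i :=
    ⟨Fin.cast (mem_antidiagonal.1 hpq).symm i, by simp⟩
  simp only [appendThreshold, Function.comp_apply, Fin.cast_cast, Fin.cast_eq_self, Fin.val_cast]
  induction j using Fin.addCases with
  | left k => simpa using (g.2.2 k).2
  | right k => simpa using (h.2.2 k).2

lemma appendThreshold_injective : Function.Injective (appendThreshold S M a) := by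
  rintro ⟨⟨⟨p, q⟩, hpq⟩, g, h⟩ ⟨⟨⟨p', q'⟩, hpq'⟩, g', h'⟩ heq
  have hlt (i : Fin a) : (i : ℕ) < p ↔ (i : ℕ) < p' := by
    have hi := appendThreshold_le_iff S M a ⟨⟨(p, q), hpq⟩, g, h⟩ i
    rw [heq] at hi
    exact hi.symm.trans (appendThreshold_le_iff S M a _ i)
  replace hpq := mem_antidiagonal.1 hpq
  replace hpq' := mem_antidiagonal.1 hpq'
  obtain rfl : p = p' := by
    by_contra hne
    have := hlt ⟨min p p', by omega⟩
    simp only at this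
    omega
  obtain rfl : q = q' := by omega
  have hf : Fin.append g.1 h.1 = Fin.append g'.1 h'.1 := funext fun j => by
    simpa [appendThreshold] using congrFun (congrArg Subtype.val heq) (Fin.cast hpq j)
  obtain rfl : g = g' :=
    Subtype.ext (funext fun i => by simpa using congrFun hf (Fin.castAdd q i))
  obtain rfl : h = h' :=
    Subtype.ext (funext fun j => by simpa using congrFun hf (Fin.natAdd p j))
  rfl

lemma appendThreshold_surjective : Function.Surjective (appendThreshold S M a) := by
  intro f
  obtain ⟨p, hpa, hp⟩ := Fin.exists_le_iff_lt_of_monotone f.2.1 M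
  have hpq : p + (a - p) = a := by omega
  have hmono : Monotone (f.1 ∘ Fin.cast hpq) := f.2.1.comp (Fin.cast_strictMono _).monotone
  refine ⟨⟨⟨(p, a - p), mem_antidiagonal.2 hpq⟩,
    ⟨fun i => f.1 (Fin.cast hpq (Fin.castAdd _ i)),
      hmono.comp (Fin.strictMono_castAdd _).monotone,
      fun i => ⟨f.2.2 _, (hp _).2 (by simp)⟩⟩,
    ⟨fun j => f.1 (Fin.cast hpq (Fin.natAdd p j)),
      hmono.comp (Fin.strictMono_natAdd _).monotone,
      fun j => ⟨f.2.2 _, not_le.1 fun h => by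
        simpa using (hp (Fin.cast hpq (Fin.natAdd p j))).1 h⟩⟩⟩, Subtype.ext ?_⟩
  change Fin.append (fun i => (f.1 ∘ Fin.cast hpq) (Fin.castAdd _ i))
    (fun j => (f.1 ∘ Fin.cast hpq) (Fin.natAdd p j)) ∘ Fin.cast hpq.symm = f.1
  rw [Fin.append_castAdd_natAdd]
  ext i
  simp

lemma mzsOn_const_eq_sum_antidiagonal (s : ℕ) :
    mzsOn S (fun _ : Fin a => s) = ∑ pq ∈ antidiagonal a,
      mzsOn (S ∩ Iic M) (fun _ : Fin pq.1 => s) * mzsOn (S ∩ Ioi M) (fun _ : Fin pq.2 => s) := by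
  rw [mzsOn, ← (Equiv.ofBijective _ ⟨appendThreshold_injective S M a,
    appendThreshold_surjective S M a⟩).tsum_eq, ENNReal.tsum_sigma', ← Finset.tsum_subtype]
  refine tsum_congr fun pq => ?_
  rw [mzsOn, mzsOn, ← ENNReal.tsum_prod_mul (fun g : MonoTuple pq.1.1 _ => weight _ g.1)
    (fun h : MonoTuple pq.1.2 _ => weight _ h.1)]
  refine tsum_congr fun x => ?_
  change weight _ (appendThreshold S M a ⟨pq, x⟩).1 = _
  rw [appendThreshold, weight_comp_cast, weight_const_append]

end Split

lemma sum_mzsOn_mul_pow_eq_sum_mzsOn_mul_mzsOn (S : Set ℕ) {m : ℕ} (hm : m ∈ S) (s n : ℕ) :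
    ∑ p ∈ antidiagonal n, mzsOn S (fun _ : Fin p.1 => s) * ((m : ℝ≥0∞) ^ s)⁻¹ ^ p.2 =
      ∑ p ∈ antidiagonal n,
        mzsOn (S ∩ Iic m) (fun _ : Fin p.1 => s) * mzsOn (S ∩ Ici m) (fun _ : Fin p.2 => s) := by
  have hlow : S ∩ Ici m ∩ Iic m = {m} := by
    ext k
    constructor
    · rintro ⟨⟨-, hmk⟩, hkm⟩
      exact le_antisymm hkm hmk
    · rintro rfl
      exact ⟨⟨hm, Set.self_mem_Ici⟩, Set.self_mem_Iic⟩
  have hhigh : S ∩ Ici m ∩ Ioi m = S ∩ Ioi m := by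
    rw [Set.inter_assoc, Set.inter_eq_right.2 Set.Ioi_subset_Ici_self]
  simp only [mzsOn_const_eq_sum_antidiagonal S m _ s,
    mzsOn_const_eq_sum_antidiagonal (S ∩ Ici m) m _ s, hlow, hhigh, mzsOn_singleton_const]
  exact sum_antidiagonal_mul_assoc_comm (fun i => mzsOn (S ∩ Iic m) fun _ : Fin i => s)
    (fun j => mzsOn (S ∩ Ioi m) fun _ : Fin j => s) (fun i => ((m : ℝ≥0∞) ^ s)⁻¹ ^ i) n

lemma inv_natCast_pow_mul_add (m s r b : ℕ) :
    ((m : ℝ≥0∞) ^ (s * b + r))⁻¹ = ((m : ℝ≥0∞) ^ r)⁻¹ * ((m : ℝ≥0∞) ^ s)⁻¹ ^ b := by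
  rw [pow_add, ENNReal.mul_inv (Or.inr (by simp)) (Or.inl (by simp)), pow_mul, ENNReal.inv_pow,
    mul_comm]

theorem sum_mzsOn_mul_tsum_eq_sum_mzsOn (S : Set ℕ) (n s r : ℕ) :
    ∑ p ∈ antidiagonal n,
        mzsOn S (fun _ : Fin p.1 => s) * ∑' m : S, ((m : ℝ≥0∞) ^ (s * p.2 + r))⁻¹ =
      ∑ p ∈ antidiagonal n,
        mzsOn S (Fin.append (Fin.append (fun _ : Fin p.1 => s) ![r]) (fun _ : Fin p.2 => s)) := by
  calc _ = ∑' m : S, ((m : ℝ≥0∞) ^ r)⁻¹ * ∑ p ∈ antidiagonal n,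
          mzsOn S (fun _ : Fin p.1 => s) * ((m : ℝ≥0∞) ^ s)⁻¹ ^ p.2 := by
        simp only [inv_natCast_pow_mul_add, ← ENNReal.tsum_mul_left, Finset.mul_sum]
        rw [Summable.tsum_finsetSum fun _ _ => ENNReal.summable]
        refine Finset.sum_congr rfl fun p _ => tsum_congr fun m => by ring
    _ = ∑' m : S, ((m : ℝ≥0∞) ^ r)⁻¹ * ∑ p ∈ antidiagonal n,
          mzsOn (S ∩ Iic m) (fun _ : Fin p.1 => s) * mzsOn (S ∩ Ici m) (fun _ : Fin p.2 => s) :=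
        tsum_congr fun m => by rw [sum_mzsOn_mul_pow_eq_sum_mzsOn_mul_mzsOn S m.2]
    _ = _ := by
        simp only [mzsOn_append_singleton_append, Finset.mul_sum]
        rw [Summable.tsum_finsetSum fun _ _ => ENNReal.summable]
        refine Finset.sum_congr rfl fun p _ => tsum_congr fun m => by ring

lemma inv_natCast_pow_ne_top {m : ℕ} (hm : 0 < m) (e : ℕ) : ((m : ℝ≥0∞) ^ e)⁻¹ ≠ ∞ :=
  ENNReal.inv_ne_top.2 (pow_ne_zero _ (Nat.cast_ne_zero.2 hm.ne'))

lemma weight_ne_top {k : ℕ} (α : Fin k → ℕ) {f : Fin k → ℕ} (hf : ∀ i, 0 < f i) :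
    weight α f ≠ ∞ :=
  ENNReal.prod_ne_top fun i _ => inv_natCast_pow_ne_top (hf i) _

lemma tsum_inv_pow_ne_top {e : ℕ} (he : 2 ≤ e) : ∑' m : Ioi 0, ((m : ℝ≥0∞) ^ e)⁻¹ ≠ ∞ := by
  have hsum : Summable fun m : Ioi 0 => ((m : ℝ) ^ e)⁻¹ :=
    (Real.summable_nat_pow_inv.2 he).subtype _
  have hterm (m : Ioi 0) : ((m : ℝ≥0∞) ^ e)⁻¹ = ENNReal.ofReal ((m : ℝ) ^ e)⁻¹ := by
    rw [ENNReal.ofReal_inv_of_pos (pow_pos (Nat.cast_pos.2 m.2) e), ENNReal.ofReal_pow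
      (Nat.cast_nonneg _), ENNReal.ofReal_natCast]
  simp only [hterm, ← ENNReal.ofReal_tsum_of_nonneg (fun _ => by positivity) hsum,
    ENNReal.ofReal_ne_top, ne_eq, not_false_eq_true]

lemma const_succ_eq_append (a s : ℕ) :
    (fun _ : Fin (a + 1) => s) = Fin.append (Fin.append (fun _ : Fin a => s) ![s]) Fin.elim0 := by
  ext i
  rw [Fin.append_elim0, Function.comp_apply, Fin.cast_eq_self]
  refine Fin.addCases (fun j => ?_) (fun j => ?_) i <;> simp

lemma mzsOn_const_ne_top {s : ℕ} (hs : 2 ≤ s) (a : ℕ) :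
    mzsOn (Ioi 0) (fun _ : Fin a => s) ≠ ∞ := by
  induction a with
  | zero => simp [mzsOn_fin_zero]
  | succ a ih =>
    refine ne_top_of_le_ne_top (ENNReal.mul_ne_top ih (tsum_inv_pow_ne_top hs)) ?_
    rw [const_succ_eq_append, mzsOn_append_singleton_append, ← ENNReal.tsum_mul_left]
    refine ENNReal.tsum_le_tsum fun m => ?_
    rw [mzsOn_fin_zero, mul_one]
    gcongr
    exact mzsOn_mono Set.inter_subset_left _

lemma mzs_eq_toReal_mzsOn {k : ℕ} (α : Fin k → ℕ) : mzs α = (mzsOn (Ioi 0) α).toReal := by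
  rw [mzsOn, ENNReal.tsum_toReal_eq fun f : MonoTuple k (Ioi 0) => weight_ne_top α f.2.2]
  simp only [weight, ENNReal.toReal_prod, ENNReal.toReal_inv, ENNReal.toReal_pow,
    ENNReal.toReal_natCast]
  rfl

lemma rz_eq_toReal_tsum (e : ℕ) : rz e = (∑' m : Ioi 0, ((m : ℝ≥0∞) ^ e)⁻¹).toReal := by
  rw [ENNReal.tsum_toReal_eq fun m => inv_natCast_pow_ne_top m.2 e]
  simp only [ENNReal.toReal_inv, ENNReal.toReal_pow, ENNReal.toReal_natCast]
  rfl

end ZetaStar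

open ZetaStar

theorem stmt4 (n s r : ℕ) (hs : 2 ≤ s) (hr : 2 ≤ r) :
    ∑ ab ∈ Finset.HasAntidiagonal.antidiagonal n,
        mzs (fun _ : Fin ab.1 => s) * rz (s * ab.2 + r) =
      ∑ ab ∈ Finset.HasAntidiagonal.antidiagonal n,
        mzs (Fin.append (Fin.append (fun _ : Fin ab.1 => s) ![r])
          (fun _ : Fin ab.2 => s)) := by
  have key := sum_mzsOn_mul_tsum_eq_sum_mzsOn (Ioi 0) n s r
  have hlhs : ∀ p ∈ antidiagonal n, mzsOn (Ioi 0) (fun _ : Fin p.1 => s) *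
      ∑' m : Ioi 0, ((m : ℝ≥0∞) ^ (s * p.2 + r))⁻¹ ≠ ∞ := fun p _ =>
    ENNReal.mul_ne_top (mzsOn_const_ne_top hs _) (tsum_inv_pow_ne_top (by omega))
  have hrhs := ENNReal.sum_ne_top.1 (key ▸ ENNReal.sum_ne_top.2 hlhs)
  simp only [mzs_eq_toReal_mzsOn, rz_eq_toReal_tsum, ← ENNReal.toReal_mul,
    ← ENNReal.toReal_sum hlhs, ← ENNReal.toReal_sum hrhs, key]
end

section
/- For every nonnegative integer m, Σ_{r=0}^{2m+1} (-1)^{r+1} ζ({1}^r, 2m+3-r) = 0. -/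
open scoped BigOperators

open scoped ENNReal NNReal
open Filter

namespace MSAux

/-! ### Gap coordinates for strictly increasing positive tuples -/

/-- extended gap sequence -/
def dd {p : ℕ} (d : Fin p → ℕ+) (n : ℕ) : ℕ := if h : n < p then (d ⟨n, h⟩ : ℕ) else 0

/-- partial sums -/
def pp {p : ℕ} (d : Fin p → ℕ+) (i : Fin p) : ℕ := ∑ j ∈ Finset.range ((i : ℕ) + 1), dd d j

/-- total sum -/
def tt {p : ℕ} (d : Fin p → ℕ+) : ℕ := ∑ j : Fin p, (d j : ℕ)

lemma dd_val {p : ℕ} (d : Fin p → ℕ+) (i : Fin p) : dd d (i : ℕ) = (d i : ℕ) := by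
  unfold dd
  rw [dif_pos i.isLt]

lemma dd_eq {p : ℕ} (d : Fin p → ℕ+) (i : Fin p) {n : ℕ} (h : (i : ℕ) = n) :
    dd d n = (d i : ℕ) := h ▸ dd_val d i

lemma pp_pos {p : ℕ} (d : Fin p → ℕ+) (i : Fin p) : 0 < pp d i := by
  unfold pp
  refine Finset.sum_pos' (fun j _ => Nat.zero_le _) ⟨(i : ℕ), ?_, ?_⟩
  · simp
  · rw [dd_val]; exact (d i).pos

lemma pp_strictMono {p : ℕ} (d : Fin p → ℕ+) : StrictMono (fun i => pp d i) := by
  intro i j hij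
  unfold pp
  refine Finset.sum_lt_sum_of_subset ?_ (i := (j : ℕ)) ?_ ?_ ?_ ?_
  · exact Finset.range_subset_range.2 (by have := hij; omega)
  · simp
  · simp; omega
  · rw [dd_val]; exact (d j).pos
  · intro k _ _; exact Nat.zero_le _

lemma pp_last {p : ℕ} (d : Fin (p + 1) → ℕ+) : pp d (Fin.last p) = tt d := by
  unfold pp tt
  simp only [Fin.val_last]
  rw [← Fin.sum_univ_eq_sum_range (fun t => dd d t) (p + 1)]
  exact Finset.sum_congr rfl fun i _ => dd_val d i

lemma tt_pos {p : ℕ} (d : Fin (p + 1) → ℕ+) : 0 < tt d := by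
  unfold tt
  refine Finset.sum_pos (fun i _ => (d i).pos) ⟨Fin.last p, Finset.mem_univ _⟩

lemma dd_snoc_lt {q : ℕ} (d : Fin q → ℕ+) (x : ℕ+) {t : ℕ} (ht : t < q) :
    dd (Fin.snoc d x) t = dd d t := by
  unfold dd
  rw [dif_pos (by omega : t < q + 1), dif_pos ht]
  have h1 : (⟨t, by omega⟩ : Fin (q + 1)) = Fin.castSucc ⟨t, ht⟩ := rfl
  rw [h1, Fin.snoc_castSucc]

lemma pp_snoc_castSucc {q : ℕ} (d : Fin q → ℕ+) (x : ℕ+) (j : Fin q) :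
    pp (Fin.snoc d x) (Fin.castSucc j) = pp d j := by
  unfold pp
  refine Finset.sum_congr rfl fun t htm => ?_
  rw [Finset.mem_range] at htm
  exact dd_snoc_lt d x (by simpa using (by omega : t < (j : ℕ) + 1).trans_le j.isLt)

lemma tt_snoc {q : ℕ} (d : Fin q → ℕ+) (x : ℕ+) : tt (Fin.snoc d x) = tt d + (x : ℕ) := by
  unfold tt
  rw [Fin.sum_univ_castSucc]
  simp [Fin.snoc_castSucc, Fin.snoc_last]

lemma pp_snoc_last {q : ℕ} (d : Fin q → ℕ+) (x : ℕ+) :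
    pp (Fin.snoc d x) (Fin.last q) = tt d + (x : ℕ) := by
  rw [pp_last, tt_snoc]

lemma pp_succ {p : ℕ} (d : Fin p → ℕ+) (i j : Fin p) (h : (i : ℕ) = (j : ℕ) + 1) :
    pp d i = pp d j + dd d (i : ℕ) := by
  unfold pp
  rw [h, Finset.sum_range_succ]

/-- predecessor value -/
def pv {p : ℕ} (g : Fin p → ℕ) (i : Fin p) : ℕ :=
  if h : 0 < (i : ℕ) then g ⟨(i : ℕ) - 1, by omega⟩ else 0

lemma pv_lt {p : ℕ} (g : Fin p → ℕ) (hsm : StrictMono g) (hpos : ∀ i, 0 < g i) (i : Fin p) :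
    pv g i < g i := by
  unfold pv
  split
  · rename_i h
    exact hsm (show (⟨(i : ℕ) - 1, by omega⟩ : Fin p) < i by rw [Fin.lt_def]; simp; omega)
  · exact hpos i

/-- gaps of a strictly increasing positive tuple -/
def gapsOf {p : ℕ} (f : {f : Fin p → ℕ // StrictMono f ∧ ∀ i, 0 < f i}) : Fin p → ℕ+ :=
  fun i => ⟨f.1 i - pv f.1 i, by have := pv_lt f.1 f.2.1 f.2.2 i; omega⟩

/-- Gap equivalence. -/
def gapEquiv (p : ℕ) : (Fin p → ℕ+) ≃ {f : Fin p → ℕ // StrictMono f ∧ ∀ i, 0 < f i} where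
  toFun d := ⟨fun i => pp d i, pp_strictMono d, fun i => pp_pos d i⟩
  invFun := gapsOf
  left_inv d := by
    funext i
    apply PNat.coe_injective
    show pp d i - pv (fun t => pp d t) i = (d i : ℕ)
    rcases Nat.eq_zero_or_pos (i : ℕ) with h0 | h0
    · have hpv : pv (fun t => pp d t) i = 0 := by unfold pv; rw [dif_neg (by omega)]
      rw [hpv]
      have h2 : pp d i = dd d 0 := by
        unfold pp; rw [h0]; exact Finset.sum_range_one (f := dd d)
      rw [h2, ← h0, dd_val]
      omega
    · have hpv : pv (fun t => pp d t) i = pp d ⟨(i : ℕ) - 1, by omega⟩ := by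
        unfold pv; rw [dif_pos h0]
      rw [hpv, pp_succ d i ⟨(i : ℕ) - 1, by omega⟩ (by simp; omega), dd_val]
      omega
  right_inv f := by
    apply Subtype.ext
    funext i
    show pp (gapsOf f) i = f.1 i
    have key : ∀ n : ℕ, ∀ i : Fin p, (i : ℕ) = n → pp (gapsOf f) i = f.1 i := by
      intro n
      induction n with
      | zero =>
        intro i hi
        have h2 : pp (gapsOf f) i = dd (gapsOf f) 0 := by
          unfold pp; rw [hi]; exact Finset.sum_range_one (f := dd (gapsOf f))
        rw [h2, dd_eq (gapsOf f) i hi]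
        show f.1 i - pv f.1 i = f.1 i
        have hpv : pv f.1 i = 0 := by unfold pv; rw [dif_neg (by omega)]
        omega
      | succ n ih =>
        intro i hi
        have hn : n < p := by have := i.isLt; omega
        have hj := ih ⟨n, hn⟩ rfl
        rw [pp_succ _ i ⟨n, hn⟩ (by simp [hi]), hj, dd_val]
        show f.1 ⟨n, hn⟩ + (f.1 i - pv f.1 i) = f.1 i
        have hv : (i : ℕ) - 1 = n := by omega
        have hpv : pv f.1 i = f.1 ⟨n, hn⟩ := by
          unfold pv
          rw [dif_pos (by omega)]
          exact congrArg f.1 (Fin.ext hv)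
        have hle : f.1 ⟨n, hn⟩ ≤ f.1 i := (f.2.1 (show (⟨n, hn⟩ : Fin p) < i by
          rw [Fin.lt_def]; simp; omega)).le
        omega
    exact key (i : ℕ) i rfl

/-! ### The connector and telescoping -/

noncomputable def conn (a b : ℕ) : ℝ≥0∞ := (((a + b).choose a : ℕ) : ℝ≥0∞)⁻¹

lemma conn_comm (a b : ℕ) : conn a b = conn b a := by
  unfold conn
  rw [Nat.choose_symm_add, Nat.add_comm a b]

lemma conn_zero (a : ℕ) : conn a 0 = 1 := by
  simp [conn, Nat.choose_self]

/-- The single telescoping step, as an identity of real numbers. -/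
lemma tel_step (a k : ℕ) (ha : 0 < a) :
    (((k + 1) * ((a + (k + 1)).choose a) : ℕ) : ℝ)⁻¹
      = ((a * ((a + k).choose a) : ℕ) : ℝ)⁻¹ - ((a * ((a + (k + 1)).choose a) : ℕ) : ℝ)⁻¹ := by
  obtain ⟨a', rfl⟩ : ∃ a', a = a' + 1 := ⟨a - 1, by omega⟩
  set A := (a' + 1 + k).choose (a' + 1) with hA
  set B := (a' + 1 + k).choose a' with hB
  have hApos : 0 < A := Nat.choose_pos (by omega)
  have hBpos : 0 < B := Nat.choose_pos (by omega)
  have hP : (a' + 1 + (k + 1)).choose (a' + 1) = B + A := by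
    have h1 : a' + 1 + (k + 1) = (a' + 1 + k) + 1 := by omega
    rw [h1, Nat.choose_succ_succ (a' + 1 + k) a']
  have hkey : A * (a' + 1) = B * (k + 1) := by
    have h6 := Nat.choose_succ_right_eq (a' + 1 + k) a'
    rw [← hA, ← hB] at h6
    have h5 : a' + 1 + k - a' = k + 1 := by omega
    rw [h5] at h6
    exact h6
  rw [hP]
  have hkeyR : (A : ℝ) * (a' + 1) = (B : ℝ) * (k + 1) := by exact_mod_cast hkey
  have h1 : ((k:ℝ) + 1) ≠ 0 := by positivity
  have h2 : ((A:ℝ) + B) ≠ 0 := by positivity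
  have h3 : ((a':ℝ) + 1) ≠ 0 := by positivity
  have h4 : (A:ℝ) ≠ 0 := by positivity
  push_cast
  rw [mul_inv, mul_inv, mul_inv]
  have e1 : ((k:ℝ) + 1)⁻¹ * ((B:ℝ) + A)⁻¹ = B / ((k + 1) * B * (B + A)) := by
    field_simp
  have e2 : ((a':ℝ) + 1)⁻¹ * ((A:ℝ))⁻¹ - ((a':ℝ) + 1)⁻¹ * ((B:ℝ) + A)⁻¹
      = B / ((a' + 1) * A * (B + A)) := by
    field_simp
    ring
  rw [e1, e2]
  congr 1
  linear_combination (-((B:ℝ) + A)) * hkeyR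

lemma ofReal_nat_inv_mul (M C : ℕ) (hM : 0 < M) (hC : 0 < C) :
    ENNReal.ofReal (((M * C : ℕ) : ℝ))⁻¹ = ((M : ℝ≥0∞))⁻¹ * ((C : ℝ≥0∞))⁻¹ := by
  rw [ENNReal.ofReal_inv_of_pos (by positivity), ENNReal.ofReal_natCast]
  push_cast
  rw [ENNReal.mul_inv (Or.inl (by exact_mod_cast hM.ne')) (Or.inl (ENNReal.natCast_ne_top M))]

/-- The telescoping sum identity in `ℝ≥0∞`. -/
lemma tel (a s : ℕ) (ha : 0 < a) :
    ∑' x : ℕ+, (((s + (x : ℕ) : ℕ)) : ℝ≥0∞)⁻¹ * conn a (s + (x : ℕ))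
      = ((a : ℝ≥0∞))⁻¹ * conn a s := by
  set G : ℕ → ℝ := fun n => (((s + n + 1) * ((a + (s + n + 1)).choose a) : ℕ) : ℝ)⁻¹ with hG
  set g : ℕ → ℝ := fun n => ((a * ((a + s + n).choose a) : ℕ) : ℝ)⁻¹ with hg
  have hGg : ∀ n, G n = g n - g (n + 1) := by
    intro n
    show (((s + n + 1) * ((a + (s + n + 1)).choose a) : ℕ) : ℝ)⁻¹
      = ((a * ((a + s + n).choose a) : ℕ) : ℝ)⁻¹ - ((a * ((a + s + (n + 1)).choose a) : ℕ) : ℝ)⁻¹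
    rw [show a + s + (n + 1) = a + (s + n + 1) from by omega,
        show a + s + n = a + (s + n) from by omega]
    exact tel_step a (s + n) ha
  have hnonneg : ∀ n, 0 ≤ G n := fun n => by positivity
  have hgtend : Tendsto g atTop (nhds 0) := by
    apply squeeze_zero (g := fun n : ℕ => (((s + n + 1) : ℕ) : ℝ)⁻¹) (fun n => by positivity)
    · intro n
      have hnat : s + n + 1 ≤ a * ((a + s + n).choose a) := by
        have h1 : (a + s + n).choose (s + n) = (a + s + n).choose a := by
          rw [← Nat.choose_symm (by omega : a ≤ a + s + n)]
          congr 1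
          omega
        calc s + n + 1 = (s + n + 1).choose (s + n) := (Nat.choose_succ_self_right (s + n)).symm
          _ ≤ (a + s + n).choose (s + n) := Nat.choose_le_choose _ (by omega)
          _ = (a + s + n).choose a := h1
          _ ≤ a * ((a + s + n).choose a) := Nat.le_mul_of_pos_left _ ha
      have hcast : (((s + n + 1) : ℕ) : ℝ) ≤ ((a * ((a + s + n).choose a) : ℕ) : ℝ) := by
        exact_mod_cast hnat
      exact inv_anti₀ (by positivity) hcast
    · have efun : (fun n : ℕ => (((s + n + 1) : ℕ) : ℝ)⁻¹)
          = (fun n : ℕ => (((n + (s + 1)) : ℕ) : ℝ)⁻¹) := by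
        funext n
        congr 2
        omega
      rw [efun]
      have := tendsto_inv_atTop_zero.comp
        (tendsto_natCast_atTop_atTop (R := ℝ).comp (tendsto_add_atTop_nat (s + 1)))
      exact Filter.Tendsto.congr (fun n => rfl) this
  have hpart : ∀ N, ∑ i ∈ Finset.range N, G i = g 0 - g N := by
    intro N
    rw [Finset.sum_congr rfl (fun i _ => hGg i)]
    exact Finset.sum_range_sub' g N
  have hsum : HasSum G (g 0) := by
    rw [hasSum_iff_tendsto_nat_of_nonneg hnonneg]
    simp only [hpart]
    have h2 : Tendsto (fun N => g 0 - g N) atTop (nhds (g 0 - 0)) :=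
      tendsto_const_nhds.sub hgtend
    simpa using h2
  calc ∑' x : ℕ+, (((s + (x : ℕ) : ℕ)) : ℝ≥0∞)⁻¹ * conn a (s + (x : ℕ))
      = ∑' n : ℕ, (((s + ((n.succPNat : ℕ+) : ℕ) : ℕ)) : ℝ≥0∞)⁻¹
          * conn a (s + ((n.succPNat : ℕ+) : ℕ)) := by
        rw [← Equiv.pnatEquivNat.symm.tsum_eq
          (fun x : ℕ+ => (((s + (x : ℕ) : ℕ)) : ℝ≥0∞)⁻¹ * conn a (s + (x : ℕ)))]
        rfl
    _ = ∑' n : ℕ, ENNReal.ofReal (G n) := by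
        refine tsum_congr fun n => ?_
        have e : s + ((n.succPNat : ℕ+) : ℕ) = s + n + 1 := by
          simp [Nat.succPNat]
          omega
        rw [e]
        exact (ofReal_nat_inv_mul (s + n + 1) ((a + (s + n + 1)).choose a) (by omega)
          (Nat.choose_pos (by omega))).symm
    _ = ENNReal.ofReal (∑' n, G n) := (ENNReal.ofReal_tsum_of_nonneg hnonneg hsum.summable).symm
    _ = ENNReal.ofReal (g 0) := by rw [hsum.tsum_eq]
    _ = ((a : ℝ≥0∞))⁻¹ * conn a s := by
        show ENNReal.ofReal ((a * ((a + s + 0).choose a) : ℕ) : ℝ)⁻¹ = _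
        exact ofReal_nat_inv_mul a ((a + s).choose a) ha (Nat.choose_pos (by omega))

/-! ### Connected sums -/

noncomputable def Wfun (p q e : ℕ) (d : (Fin (p + 1) → ℕ+) × (Fin q → ℕ+)) : ℝ≥0∞ :=
  (∏ i : Fin p, ((pp d.1 (Fin.castSucc i) : ℕ) : ℝ≥0∞)⁻¹) * (((tt d.1 : ℕ) : ℝ≥0∞) ^ e)⁻¹ *
    ((∏ j : Fin q, ((pp d.2 j : ℕ) : ℝ≥0∞)⁻¹) * conn (tt d.1) (tt d.2))

noncomputable def W (p q e : ℕ) : ℝ≥0∞ :=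
  ∑' d : (Fin (p + 1) → ℕ+) × (Fin q → ℕ+), Wfun p q e d

/-- snoc equivalence -/
def snocEquivP (q : ℕ) : (Fin q → ℕ+) × ℕ+ ≃ (Fin (q + 1) → ℕ+) where
  toFun y := Fin.snoc y.1 y.2
  invFun d := (fun i => d (Fin.castSucc i), d (Fin.last q))
  left_inv y := by
    refine Prod.ext ?_ ?_
    · funext i
      simp [Fin.snoc_castSucc]
    · simp [Fin.snoc_last]
  right_inv d := Fin.snoc_init_self d

lemma Wfun_snoc_right (p q e : ℕ) (d1 : Fin (p + 1) → ℕ+) (d2 : Fin q → ℕ+) (x : ℕ+) :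
    Wfun p (q + 1) e (d1, Fin.snoc d2 x) =
      ((∏ i : Fin p, ((pp d1 (Fin.castSucc i) : ℕ) : ℝ≥0∞)⁻¹) * (((tt d1 : ℕ) : ℝ≥0∞) ^ e)⁻¹ *
        (∏ j : Fin q, ((pp d2 j : ℕ) : ℝ≥0∞)⁻¹)) *
      ((((tt d2 + (x : ℕ) : ℕ)) : ℝ≥0∞)⁻¹ * conn (tt d1) (tt d2 + (x : ℕ))) := by
  unfold Wfun
  rw [Fin.prod_univ_castSucc (f := fun j : Fin (q + 1) =>
    ((pp (Fin.snoc d2 x) j : ℕ) : ℝ≥0∞)⁻¹)]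
  simp only [pp_snoc_castSucc, pp_snoc_last, tt_snoc]
  ring

/-- Transport relation (II): lengthen the second chain. -/
lemma W_step (p q e : ℕ) : W p (q + 1) e = W p q (e + 1) := by
  unfold W
  rw [ENNReal.tsum_prod', ENNReal.tsum_prod']
  refine tsum_congr fun d1 => ?_
  have h1 := ((snocEquivP q).tsum_eq (fun d2 => Wfun p (q + 1) e (d1, d2))).symm
  rw [h1, ENNReal.tsum_prod']
  refine tsum_congr fun d2 => ?_
  have hT1 : 0 < tt d1 := tt_pos d1
  calc ∑' x : ℕ+, Wfun p (q + 1) e (d1, Fin.snoc d2 x)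
      = ∑' x : ℕ+, ((∏ i : Fin p, ((pp d1 (Fin.castSucc i) : ℕ) : ℝ≥0∞)⁻¹) *
          (((tt d1 : ℕ) : ℝ≥0∞) ^ e)⁻¹ * (∏ j : Fin q, ((pp d2 j : ℕ) : ℝ≥0∞)⁻¹)) *
          ((((tt d2 + (x : ℕ) : ℕ)) : ℝ≥0∞)⁻¹ * conn (tt d1) (tt d2 + (x : ℕ))) :=
        tsum_congr fun x => Wfun_snoc_right p q e d1 d2 x
    _ = ((∏ i : Fin p, ((pp d1 (Fin.castSucc i) : ℕ) : ℝ≥0∞)⁻¹) *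
          (((tt d1 : ℕ) : ℝ≥0∞) ^ e)⁻¹ * (∏ j : Fin q, ((pp d2 j : ℕ) : ℝ≥0∞)⁻¹)) *
          ∑' x : ℕ+, (((tt d2 + (x : ℕ) : ℕ)) : ℝ≥0∞)⁻¹ * conn (tt d1) (tt d2 + (x : ℕ)) :=
        ENNReal.tsum_mul_left
    _ = ((∏ i : Fin p, ((pp d1 (Fin.castSucc i) : ℕ) : ℝ≥0∞)⁻¹) *
          (((tt d1 : ℕ) : ℝ≥0∞) ^ e)⁻¹ * (∏ j : Fin q, ((pp d2 j : ℕ) : ℝ≥0∞)⁻¹)) *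
          (((tt d1 : ℕ) : ℝ≥0∞)⁻¹ * conn (tt d1) (tt d2)) := by
        rw [tel (tt d1) (tt d2) hT1]
    _ = Wfun p q (e + 1) (d1, d2) := by
        unfold Wfun
        have hne : ((tt d1 : ℕ) : ℝ≥0∞) ≠ 0 := by exact_mod_cast hT1.ne'
        have hnt : ((tt d1 : ℕ) : ℝ≥0∞) ≠ ⊤ := ENNReal.natCast_ne_top _
        rw [pow_succ, ENNReal.mul_inv (Or.inl (pow_ne_zero e hne)) (Or.inr hne)]
        ring

/-- Transport relation (III): move the connector across, swapping the roles. -/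
lemma W_swap (p q : ℕ) : W p (q + 1) 1 = W q p 2 := by
  unfold W
  have h0 := ((Equiv.prodComm (Fin (q + 1) → ℕ+) (Fin (p + 1) → ℕ+)).tsum_eq
    (fun d : (Fin (p + 1) → ℕ+) × (Fin (q + 1) → ℕ+) => Wfun p (q + 1) 1 d)).symm
  rw [h0, ENNReal.tsum_prod', ENNReal.tsum_prod']
  refine tsum_congr fun d2 => ?_
  have h1 := ((snocEquivP p).tsum_eq
    (fun d1 => Wfun p (q + 1) 1 ((Equiv.prodComm _ _) (d2, d1)))).symm
  rw [h1, ENNReal.tsum_prod']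
  refine tsum_congr fun d1 => ?_
  have hT2 : 0 < tt d2 := tt_pos d2
  calc ∑' x : ℕ+, Wfun p (q + 1) 1 (Fin.snoc d1 x, d2)
      = ∑' x : ℕ+, ((∏ i : Fin p, ((pp d1 i : ℕ) : ℝ≥0∞)⁻¹) *
          (∏ j : Fin (q + 1), ((pp d2 j : ℕ) : ℝ≥0∞)⁻¹)) *
          ((((tt d1 + (x : ℕ) : ℕ)) : ℝ≥0∞)⁻¹ * conn (tt d2) (tt d1 + (x : ℕ))) := by
        refine tsum_congr fun x => ?_
        unfold Wfun
        have hc : ∀ i : Fin p, pp (Fin.snoc d1 x) (Fin.castSucc i) = pp d1 i :=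
          pp_snoc_castSucc d1 x
        simp only [hc, tt_snoc, pow_one, conn_comm (tt d2)]
        rw [conn_comm]
        ring
    _ = ((∏ i : Fin p, ((pp d1 i : ℕ) : ℝ≥0∞)⁻¹) *
          (∏ j : Fin (q + 1), ((pp d2 j : ℕ) : ℝ≥0∞)⁻¹)) *
          ∑' x : ℕ+, (((tt d1 + (x : ℕ) : ℕ)) : ℝ≥0∞)⁻¹ * conn (tt d2) (tt d1 + (x : ℕ)) :=
        ENNReal.tsum_mul_left
    _ = ((∏ i : Fin p, ((pp d1 i : ℕ) : ℝ≥0∞)⁻¹) *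
          (∏ j : Fin (q + 1), ((pp d2 j : ℕ) : ℝ≥0∞)⁻¹)) *
          (((tt d2 : ℕ) : ℝ≥0∞)⁻¹ * conn (tt d2) (tt d1)) := by
        rw [tel (tt d2) (tt d1) hT2]
    _ = Wfun q p 2 (d2, d1) := by
        unfold Wfun
        rw [Fin.prod_univ_castSucc (f := fun j : Fin (q + 1) =>
          ((pp d2 j : ℕ) : ℝ≥0∞)⁻¹)]
        rw [pp_last]
        have hne : ((tt d2 : ℕ) : ℝ≥0∞) ≠ 0 := by exact_mod_cast hT2.ne'
        rw [show (2 : ℕ) = 1 + 1 from rfl, pow_succ, pow_one,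
          ENNReal.mul_inv (Or.inl hne) (Or.inr hne)]
        ring

/-- Iterated transport. -/
lemma W_shift (p : ℕ) : ∀ k e q, W p (q + k) e = W p q (e + k) := by
  intro k
  induction k with
  | zero => intro e q; rfl
  | succ k ih =>
    intro e q
    rw [show q + (k + 1) = (q + k) + 1 from by omega, W_step p (q + k) e, ih (e + 1) q,
      show e + 1 + k = e + (k + 1) from by omega]


/-! ### emzv and duality -/

noncomputable def emzv {r : ℕ} (α : Fin r → ℕ) : ℝ≥0∞ :=
  ∑' f : {f : Fin r → ℕ // StrictMono f ∧ ∀ i, 0 < f i},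
    ∏ i, ((f.1 i : ℝ≥0∞) ^ (α i))⁻¹

lemma mzv_eq_toReal {r : ℕ} (α : Fin r → ℕ) : mzv α = (emzv α).toReal := by
  unfold mzv emzv
  rw [ENNReal.tsum_toReal_eq]
  · refine tsum_congr fun f => ?_
    rw [ENNReal.toReal_prod]
    refine Finset.prod_congr rfl fun i _ => ?_
    rw [ENNReal.toReal_inv, ENNReal.toReal_pow, ENNReal.toReal_natCast]
  · intro f
    refine ENNReal.prod_ne_top fun i _ => ?_
    rw [ENNReal.inv_ne_top]
    exact pow_ne_zero _ (by exact_mod_cast (f.2.2 i).ne')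

lemma emzv_eq_W (a c : ℕ) : emzv (Fin.snoc (ones a) c) = W a 0 c := by
  unfold emzv W
  rw [← (gapEquiv (a + 1)).tsum_eq
    (fun f : {f : Fin (a + 1) → ℕ // StrictMono f ∧ ∀ i, 0 < f i} =>
      ∏ i, ((f.1 i : ℝ≥0∞) ^ ((Fin.snoc (ones a) c : Fin (a + 1) → ℕ) i))⁻¹),
    ENNReal.tsum_prod']
  refine tsum_congr fun d => ?_
  have huniq : ∑' d2 : Fin 0 → ℕ+, Wfun a 0 c (d, d2) = Wfun a 0 c (d, default) :=
    tsum_eq_single default (fun b hb => absurd (Subsingleton.elim b default) hb)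
  rw [huniq]
  show ∏ i : Fin (a + 1), ((pp d i : ℝ≥0∞) ^ ((Fin.snoc (ones a) c : Fin (a + 1) → ℕ) i))⁻¹ = _
  rw [Fin.prod_univ_castSucc (f := fun i : Fin (a + 1) =>
    ((pp d i : ℝ≥0∞) ^ ((Fin.snoc (ones a) c : Fin (a + 1) → ℕ) i))⁻¹)]
  unfold Wfun
  have htt : tt (default : Fin 0 → ℕ+) = 0 := rfl
  rw [htt, conn_zero, Fin.snoc_last, pp_last]
  simp only [Fin.snoc_castSucc, ones, pow_one]
  simp

theorem emzv_dual (a b : ℕ) :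
    emzv (Fin.snoc (ones a) (b + 2)) = emzv (Fin.snoc (ones b) (a + 2)) := by
  rw [emzv_eq_W a (b + 2), emzv_eq_W b (a + 2)]
  have h1 : W a 0 (b + 2) = W a (b + 1) 1 := by
    have h := W_shift a (b + 1) 1 0
    rw [Nat.zero_add, show 1 + (b + 1) = b + 2 from by omega] at h
    exact h.symm
  have h2 : W b 0 (a + 2) = W b a 2 := by
    have h := W_shift b a 2 0
    rw [Nat.zero_add, show 2 + a = a + 2 from by omega] at h
    exact h.symm
  rw [h1, h2, W_swap a b]

end MSAux

theorem stmt6 (m : ℕ) :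
    ∑ r ∈ Finset.range (2 * m + 2),
        (-1 : ℝ) ^ (r + 1) * mzv (Fin.snoc (ones r) (2 * m + 3 - r)) = 0 := by
  classical
  set F : ℕ → ℝ := fun r => mzv (Fin.snoc (ones r) (2 * m + 3 - r)) with hF
  have key : ∀ r, r ≤ 2 * m + 1 → F r = F (2 * m + 1 - r) := by
    intro r hr
    show mzv (Fin.snoc (ones r) (2 * m + 3 - r))
      = mzv (Fin.snoc (ones (2 * m + 1 - r)) (2 * m + 3 - (2 * m + 1 - r)))
    rw [show 2 * m + 3 - r = (2 * m + 1 - r) + 2 from by omega,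
        show 2 * m + 3 - (2 * m + 1 - r) = r + 2 from by omega,
        MSAux.mzv_eq_toReal, MSAux.mzv_eq_toReal,
        MSAux.emzv_dual r (2 * m + 1 - r)]
  set S : ℝ := ∑ r ∈ Finset.range (2 * m + 2), (-1 : ℝ) ^ (r + 1) * F r with hS
  have hrefl : S = ∑ r ∈ Finset.range (2 * m + 2),
      (-1 : ℝ) ^ ((2 * m + 1 - r) + 1) * F (2 * m + 1 - r) := by
    rw [hS, ← Finset.sum_range_reflect (fun r => (-1 : ℝ) ^ (r + 1) * F r) (2 * m + 2)]
    refine Finset.sum_congr rfl fun j hj => ?_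
    rw [show 2 * m + 2 - 1 - j = 2 * m + 1 - j from by omega]
  have hzero : ∀ r ∈ Finset.range (2 * m + 2),
      (-1 : ℝ) ^ (r + 1) * F r + (-1 : ℝ) ^ ((2 * m + 1 - r) + 1) * F (2 * m + 1 - r) = 0 := by
    intro r hr
    rw [Finset.mem_range] at hr
    have hr' : r ≤ 2 * m + 1 := by omega
    rw [← key r hr']
    rw [show (2 * m + 1 - r) + 1 = 2 * m + 2 - r from by omega]
    have hsign : (-1 : ℝ) ^ (r + 1) + (-1 : ℝ) ^ (2 * m + 2 - r) = 0 := by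
      rcases Nat.even_or_odd r with h | h
      · have h1 : Odd (r + 1) := Even.add_one h
        have h2 : Even (2 * m + 2 - r) := by
          rcases h with ⟨t, ht⟩
          exact ⟨m + 1 - t, by omega⟩
        rw [h1.neg_one_pow, h2.neg_one_pow]
        ring
      · have h1 : Even (r + 1) := Odd.add_one h
        have h2 : Odd (2 * m + 2 - r) := by
          rcases h with ⟨t, ht⟩
          exact ⟨m - t, by omega⟩
        rw [h1.neg_one_pow, h2.neg_one_pow]
        ring
    calc (-1 : ℝ) ^ (r + 1) * F r + (-1 : ℝ) ^ (2 * m + 2 - r) * F r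
        = ((-1 : ℝ) ^ (r + 1) + (-1 : ℝ) ^ (2 * m + 2 - r)) * F r := by ring
      _ = 0 := by rw [hsign]; ring
  have hSS : S + S = 0 := by
    nth_rewrite 2 [hrefl]
    rw [hS, ← Finset.sum_add_distrib]
    exact Finset.sum_eq_zero hzero
  show S = 0
  linarith
end

section
/- For nonnegative integers q and n, ζ*({1}^q, n+2) = Σ_{r=1}^{q+1} Σ_{|α|=q+1, length r} ζ(α_1,...,α_{r-1}, α_r + n+1), where the inner sum is over compositions (α_1,...,α_r) of q+1 into r positive parts. -/
open scoped BigOperators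

/-!
In `ℝ≥0∞` all rearrangements of the defining series are free. A monotone tuple
`k₁ ≤ ⋯ ≤ kₘ` is the same as a composition `c` of `m` (its runs of equal entries) together
with a strictly increasing tuple indexed by the blocks of `c` (the value on each run), and
its weight is that of the strict tuple with the exponents summed over each block. Hence
`ζ*(α) = ∑_c ζ(blockSum c α)`, and for `α = ({1}^q, n+2)` the block sums are the block sizes,
with `n+1` added to the last one.

Passing back to `ℝ`, where a divergent `tsum` is `0`, requires `ζ*({1}^q, n+2) < ∞`.
Summing out the last variable with `∑_{k ≥ K} k⁻² ≤ 2/K` gives `ζ*(β, 1, 2) ≤ 2 ζ*(β, 2)`,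
so `ζ*({1}^q, n+2) ≤ ζ*({1}^q, 2) ≤ 2^(q+1)`.
-/

open Finset
open scoped ENNReal

namespace Composition

variable {m : ℕ} (c : Composition m)

theorem monotone_index : Monotone c.index := by
  intro j j' h
  by_contra! hlt
  have h₁ : (j' : ℕ) < c.sizeUpTo (c.index j' + 1) := by
    simpa using c.lt_sizeUpTo_index_succ j'
  have h₂ := c.monotone_sizeUpTo (show (c.index j' : ℕ) + 1 ≤ c.index j from hlt)
  have h₃ := c.sizeUpTo_index_le j
  omega

theorem surjective_index : Function.Surjective c.index :=
  fun i => ⟨c.embedding i ⟨0, c.one_le_blocksFun i⟩, c.index_embedding _ _⟩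

theorem index_eq_iff {j : Fin m} {i : Fin c.length} :
    c.index j = i ↔ c.sizeUpTo i ≤ j ∧ (j : ℕ) < c.sizeUpTo (i + 1) := by
  rw [eq_comm, ← c.mem_range_embedding_iff', c.mem_range_embedding_iff]

theorem val_index_last {q : ℕ} (c : Composition (q + 1)) :
    (c.index (Fin.last q) : ℕ) = c.length - 1 := by
  have hlt := (c.index (Fin.last q)).2
  obtain ⟨j, hj⟩ := c.surjective_index ⟨c.length - 1, by omega⟩
  have := c.monotone_index (Fin.le_last j)
  rw [hj, Fin.le_def, Fin.val_mk] at this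
  omega

theorem card_filter_index_eq (i : Fin c.length) :
    #{j | (c.index j : ℕ) = i} = c.blocksFun i := by
  have : ({j | (c.index j : ℕ) = i} : Finset (Fin m)) =
      univ.map (c.embedding i).toEmbedding := by
    ext j
    simp [Fin.val_inj, eq_comm (a := c.index j), ← c.mem_range_embedding_iff']
  rw [this, card_map, card_univ, Fintype.card_fin]

theorem image_val_index : univ.image (fun j => (c.index j : ℕ)) = range c.length := by
  ext x
  simp only [mem_image, mem_univ, true_and, mem_range]
  refine ⟨fun ⟨j, hj⟩ => hj ▸ (c.index j).2, fun hx => ?_⟩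
  obtain ⟨j, hj⟩ := c.surjective_index ⟨x, hx⟩
  exact ⟨j, by rw [hj]⟩

theorem ext_index {c c' : Composition m} (h : ∀ j, (c.index j : ℕ) = c'.index j) :
    c = c' := by
  have hlen : c.length = c'.length := by
    have := c.image_val_index
    simp only [h, c'.image_val_index] at this
    simpa using congrArg card this.symm
  refine Composition.ext (List.ext_getElem (by simpa using hlen) fun i hi hi' => ?_)
  change c.blocksFun ⟨i, by simpa using hi⟩ = c'.blocksFun ⟨i, by simpa using hi'⟩
  rw [← card_filter_index_eq, ← card_filter_index_eq]
  simp only [h]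

theorem exists_index_eq {r : ℕ} {σ : Fin m → Fin r} (hσ : Monotone σ)
    (hs : Function.Surjective σ) :
    ∃ c : Composition m, c.length = r ∧ ∀ j, (c.index j : ℕ) = σ j := by
  let c : Composition m :=
    { blocks := List.ofFn fun i => #{j | σ j = i}
      blocks_pos := by
        simp only [List.mem_ofFn, forall_exists_index, forall_apply_eq_imp_iff]
        intro i
        obtain ⟨j, hj⟩ := hs i
        exact card_pos.2 ⟨j, by simpa using hj⟩
      blocks_sum := by
        rw [List.sum_ofFn, ← card_eq_sum_card_fiberwise (fun _ _ => mem_univ _), card_univ,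
          Fintype.card_fin] }
  have hlen : c.length = r := by simp [c, Composition.length]
  have hsize (i : ℕ) : c.sizeUpTo i = #{j | (σ j : ℕ) < i} := by
    rw [sizeUpTo, List.sum_take_ofFn,
      card_eq_sum_card_fiberwise (f := σ) (t := {k | (k : ℕ) < i}) (fun _ h => by simpa using h)]
    refine sum_congr rfl fun k hk => congrArg card ?_
    ext j
    simp only [mem_filter, mem_univ, true_and] at hk ⊢
    exact ⟨fun h => ⟨h ▸ hk, h⟩, And.right⟩
  refine ⟨c, hlen, fun j => ?_⟩
  have hidx : c.index j = Fin.cast hlen.symm (σ j) := by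
    rw [c.index_eq_iff, Fin.val_cast, hsize, hsize]
    constructor
    · calc #{j' | (σ j' : ℕ) < σ j} ≤ #(Iio j) :=
            card_le_card fun j' hj' => mem_Iio.2 (hσ.reflect_lt (by simpa using hj'))
        _ = j := Fin.card_Iio j
    · calc (j : ℕ) < #(Iic j) := by simp
        _ ≤ #{j' | (σ j' : ℕ) < σ j + 1} :=
            card_le_card fun j' hj' => by simpa [Nat.lt_succ_iff] using hσ (mem_Iic.1 hj')
  simp [hidx]

section LinearOrder

variable {β : Type*} [LinearOrder β]

theorem exists_strictMono_comp_index_eq {f : Fin m → β} (hf : Monotone f) :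
    ∃ (c : Composition m) (g : Fin c.length → β), StrictMono g ∧ g ∘ c.index = f := by
  classical
  let e := (univ.image f).orderIsoOfFin rfl
  let σ j := e.symm ⟨f j, mem_image_of_mem f (mem_univ j)⟩
  have hσ : Monotone σ := fun j j' h => e.symm.monotone (Subtype.mk_le_mk.2 (hf h))
  have hs : Function.Surjective σ := by
    intro i
    obtain ⟨j, -, hj⟩ := mem_image.1 (e i).2
    exact ⟨j, e.symm_apply_eq.2 (Subtype.ext hj)⟩
  obtain ⟨c, hlen, hc⟩ := exists_index_eq hσ hs
  refine ⟨c, fun i => e (Fin.cast hlen i), fun i i' h => e.strictMono (by simpa using h), ?_⟩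
  funext j
  simp [show Fin.cast hlen (c.index j) = σ j from Fin.ext (hc j), σ]

theorem index_eq_card_of_strictMono {g : Fin c.length → β} (hg : StrictMono g) (j : Fin m) :
    (c.index j : ℕ) = #{x ∈ univ.image (g ∘ c.index) | x < (g ∘ c.index) j} := by
  classical
  rw [← image_image, image_univ_of_surjective c.surjective_index, filter_image,
    card_image_of_injective _ hg.injective]
  simp only [Function.comp_apply, hg.lt_iff_lt]
  rw [filter_gt_eq_Iio, Fin.card_Iio]

theorem eq_of_strictMono_comp_index_eq {c c' : Composition m} {g : Fin c.length → β}
    {g' : Fin c'.length → β} (hg : StrictMono g) (hg' : StrictMono g')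
    (h : g ∘ c.index = g' ∘ c'.index) : c = c' :=
  ext_index fun j => by
    rw [index_eq_card_of_strictMono c hg, index_eq_card_of_strictMono c' hg', h]

end LinearOrder

def blockSum (α : Fin m → ℕ) (i : Fin c.length) : ℕ := ∑ j, α (c.embedding i j)

end Composition

theorem sum_positive_antidiagonalTuple_eq_sum_composition {M : Type*} [AddCommMonoid M]
    {m : ℕ} (hm : 0 < m) (F : (Σ r, Fin r → ℕ) → M) :
    ∑ r ∈ Icc 1 m, ∑ α ∈ (Nat.antidiagonalTuple r m).filter (fun α => ∀ i, 0 < α i),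
        F ⟨r, α⟩ =
      ∑ c : Composition m, F ⟨c.length, c.blocksFun⟩ := by
  rw [← sum_sigma]
  refine (sum_nbij (fun c : Composition m => (⟨c.length, c.blocksFun⟩ : Σ r, Fin r → ℕ))
    ?_ ?_ ?_ fun _ _ => rfl).symm
  · intro c _
    simp only [mem_sigma, mem_Icc, mem_filter, Nat.mem_antidiagonalTuple]
    exact ⟨⟨c.length_pos_of_pos hm, c.length_le⟩, c.sum_blocksFun, c.one_le_blocksFun⟩
  · intro c _ c' _ h
    refine Composition.ext ?_
    rw [← c.ofFn_blocksFun, ← c'.ofFn_blocksFun]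
    exact List.ofFn_inj'.2 h
  · rintro ⟨r, α⟩ hα
    simp only [coe_sigma, Set.mem_sigma_iff, mem_coe, mem_filter,
      Nat.mem_antidiagonalTuple] at hα
    obtain ⟨-, hsum, hpos⟩ := hα
    let c : Composition m :=
      ⟨List.ofFn α, by simpa [List.mem_ofFn] using fun i => hpos i, by rw [List.sum_ofFn, hsum]⟩
    exact ⟨c, mem_coe.2 (mem_univ c), List.ofFn_inj'.1 c.ofFn_blocksFun⟩

abbrev StrictPosTuple (r : ℕ) := {g : Fin r → ℕ // StrictMono g ∧ ∀ i, 0 < g i}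

abbrev MonoPosTuple (m : ℕ) := {f : Fin m → ℕ // Monotone f ∧ ∀ i, 0 < f i}

def StrictPosTuple.expand {m : ℕ} (c : Composition m) (g : StrictPosTuple c.length) :
    MonoPosTuple m :=
  ⟨g.1 ∘ c.index, g.2.1.monotone.comp c.monotone_index, fun _ => g.2.2 _⟩

theorem StrictPosTuple.bijective_expand (m : ℕ) :
    Function.Bijective
      fun x : Σ c : Composition m, StrictPosTuple c.length => x.2.expand x.1 := by
  constructor
  · rintro ⟨c, g, hg, _⟩ ⟨c', g', hg', _⟩ h
    have h : g ∘ c.index = g' ∘ c'.index := congrArg Subtype.val h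
    obtain rfl := Composition.eq_of_strictMono_comp_index_eq hg hg' h
    obtain rfl := c.surjective_index.injective_comp_right h
    rfl
  · rintro ⟨f, hf, hpos⟩
    obtain ⟨c, g, hg, rfl⟩ := Composition.exists_strictMono_comp_index_eq hf
    refine ⟨⟨c, g, hg, fun i => ?_⟩, rfl⟩
    obtain ⟨j, rfl⟩ := c.surjective_index i
    exact hpos j

def MonoPosTuple.init {r : ℕ} (f : MonoPosTuple (r + 1)) : MonoPosTuple r :=
  ⟨Fin.init f.1, f.2.1.comp Fin.strictMono_castSucc.monotone, fun _ => f.2.2 _⟩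

noncomputable def mzWeight {r : ℕ} (α g : Fin r → ℕ) : ℝ≥0∞ := ∏ i, (g i : ℝ≥0∞)⁻¹ ^ α i

noncomputable def mzvENN {r : ℕ} (α : Fin r → ℕ) : ℝ≥0∞ :=
  ∑' g : StrictPosTuple r, mzWeight α g.1

noncomputable def mzsENN {m : ℕ} (α : Fin m → ℕ) : ℝ≥0∞ :=
  ∑' f : MonoPosTuple m, mzWeight α f.1

theorem mzWeight_ne_top {r : ℕ} (α : Fin r → ℕ) {g : Fin r → ℕ} (hg : ∀ i, 0 < g i) :
    mzWeight α g ≠ ∞ :=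
  ENNReal.prod_ne_top fun i _ => ENNReal.pow_ne_top (by simp [(hg i).ne'])

theorem toReal_mzWeight {r : ℕ} (α g : Fin r → ℕ) :
    (mzWeight α g).toReal = ∏ i, ((g i : ℝ) ^ α i)⁻¹ := by
  simp [mzWeight, ENNReal.toReal_prod, inv_pow]

theorem mzv_eq_toReal_mzvENN {r : ℕ} (α : Fin r → ℕ) : mzv α = (mzvENN α).toReal := by
  rw [mzvENN, ENNReal.tsum_toReal_eq fun g => mzWeight_ne_top α g.2.2, mzv]
  simp only [toReal_mzWeight]

theorem mzs_eq_toReal_mzsENN {m : ℕ} (α : Fin m → ℕ) : mzs α = (mzsENN α).toReal := by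
  rw [mzsENN, ENNReal.tsum_toReal_eq fun f => mzWeight_ne_top α f.2.2, mzs]
  simp only [toReal_mzWeight]

theorem mzWeight_comp_index {m : ℕ} (α : Fin m → ℕ) (c : Composition m)
    (g : Fin c.length → ℕ) : mzWeight α (g ∘ c.index) = mzWeight (c.blockSum α) g := by
  rw [mzWeight, ← c.prod_prod_apply_embedding]
  simp [mzWeight, Composition.blockSum, prod_pow_eq_pow_sum]

theorem mzsENN_eq_sum_mzvENN_blockSum {m : ℕ} (α : Fin m → ℕ) :
    mzsENN α = ∑ c : Composition m, mzvENN (c.blockSum α) := by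
  rw [mzsENN, ← (Equiv.ofBijective _ (StrictPosTuple.bijective_expand m)).tsum_eq,
    ← tsum_fintype (L := .unconditional _), ENNReal.tsum_sigma']
  simp [StrictPosTuple.expand, mzWeight_comp_index, mzvENN]

theorem snoc_ones_apply {q : ℕ} (a : ℕ) (j : Fin (q + 1)) :
    (Fin.snoc (ones q) (a + 1) : Fin (q + 1) → ℕ) j =
      1 + if j = Fin.last q then a else 0 := by
  induction j using Fin.lastCases with
  | last => simp [add_comm]
  | cast j => simp [ones, (Fin.castSucc_lt_last j).ne]

theorem blockSum_snoc_ones {q : ℕ} (c : Composition (q + 1)) (a : ℕ) :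
    c.blockSum (Fin.snoc (ones q) (a + 1)) =
      fun i => c.blocksFun i + if (i : ℕ) = c.length - 1 then a else 0 := by
  funext i
  have hlast :
      Fin.last q ∈ univ.map (c.embedding i).toEmbedding ↔ (i : ℕ) = c.length - 1 := by
    simp only [mem_map, mem_univ, true_and, RelEmbedding.coe_toEmbedding]
    rw [← Set.mem_range, c.mem_range_embedding_iff', Fin.ext_iff, c.val_index_last]
  have hsum : ∑ j, (if c.embedding i j = Fin.last q then a else 0) =
      if (i : ℕ) = c.length - 1 then a else 0 := by
    simp_rw [← hlast, ← sum_ite_eq' _ _ fun _ => a, sum_map]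
    rfl
  simp [Composition.blockSum, snoc_ones_apply, sum_add_distrib, hsum]

theorem ones_succ (q : ℕ) : ones (q + 1) = Fin.snoc (ones q) 1 := by
  funext j
  induction j using Fin.lastCases <;> simp [ones]

theorem mzWeight_anti {r : ℕ} {α α' g : Fin r → ℕ} (hα : α ≤ α') (hg : ∀ i, 0 < g i) :
    mzWeight α' g ≤ mzWeight α g :=
  prod_le_prod' fun i _ =>
    pow_le_pow_right_of_le_one' (ENNReal.inv_le_one.2 (by exact_mod_cast hg i)) (hα i)

theorem mzWeight_snoc {r : ℕ} (α : Fin r → ℕ) (a : ℕ) (g : Fin (r + 1) → ℕ) :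
    mzWeight (Fin.snoc α a) g = mzWeight α (Fin.init g) * (g (Fin.last r) : ℝ≥0∞)⁻¹ ^ a := by
  simp [mzWeight, Fin.prod_univ_castSucc, Fin.init]

theorem tsum_indicator_Ici_inv_sq_le {K : ℕ} (hK : 0 < K) :
    ∑' k, (Set.Ici K).indicator (fun k : ℕ => (k : ℝ≥0∞)⁻¹ ^ 2) k ≤ 2 * (K : ℝ≥0∞)⁻¹ := by
  refine ENNReal.tsum_le_of_sum_range_le fun N => ?_
  have hreal := sum_Ioo_inv_sq_le (α := ℝ) (K - 1) N
  rw [Nat.cast_sub hK, Nat.cast_one, sub_add_cancel] at hreal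
  calc ∑ k ∈ range N, (Set.Ici K).indicator (fun k : ℕ => (k : ℝ≥0∞)⁻¹ ^ 2) k
      ≤ ∑ k ∈ Ioo (K - 1) N, (k : ℝ≥0∞)⁻¹ ^ 2 := by
        rw [sum_indicator_eq_sum_filter]
        exact sum_le_sum_of_subset fun k hk => by
          simp only [Set.mem_Ici, mem_filter, mem_range, mem_Ioo] at hk ⊢
          omega
    _ = ENNReal.ofReal (∑ k ∈ Ioo (K - 1) N, ((k : ℝ) ^ 2)⁻¹) := by
        rw [ENNReal.ofReal_sum_of_nonneg fun _ _ => by positivity]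
        refine sum_congr rfl fun k hk => ?_
        have : 0 < k := by rw [mem_Ioo] at hk; omega
        rw [ENNReal.ofReal_inv_of_pos (by positivity), ENNReal.ofReal_pow (by positivity),
          ENNReal.ofReal_natCast, ENNReal.inv_pow]
    _ ≤ ENNReal.ofReal (2 / K) := ENNReal.ofReal_le_ofReal hreal
    _ = 2 * (K : ℝ≥0∞)⁻¹ := by
        rw [ENNReal.ofReal_div_of_pos (by positivity), ENNReal.ofReal_ofNat,
          ENNReal.ofReal_natCast, div_eq_mul_inv]

theorem mzsENN_snoc_snoc_le {r : ℕ} (α : Fin r → ℕ) :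
    mzsENN (Fin.snoc (Fin.snoc α 1) 2 : Fin (r + 2) → ℕ) ≤
      2 * mzsENN (Fin.snoc α 2 : Fin (r + 1) → ℕ) := by
  let u (p : MonoPosTuple (r + 1) × ℕ) : ℝ≥0∞ :=
    mzWeight (Fin.snoc α 1) p.1.1 *
      (Set.Ici (p.1.1 (Fin.last r))).indicator (fun k : ℕ => (k : ℝ≥0∞)⁻¹ ^ 2) p.2
  have hinj :
      Function.Injective fun f : MonoPosTuple (r + 2) => (f.init, f.1 (Fin.last _)) := by
    intro f f' h
    simp only [Prod.mk.injEq, MonoPosTuple.init, Subtype.mk.injEq] at h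
    exact Subtype.ext (by rw [← Fin.snoc_init_self f.1, ← Fin.snoc_init_self f'.1, h.1, h.2])
  calc mzsENN (Fin.snoc (Fin.snoc α 1) 2 : Fin (r + 2) → ℕ)
      = ∑' f : MonoPosTuple (r + 2), u (f.init, f.1 (Fin.last _)) := by
        refine tsum_congr fun f => ?_
        simp only [u]
        rw [mzWeight_snoc, Set.indicator_of_mem
          (show f.1 (Fin.last _) ∈ Set.Ici (f.init.1 (Fin.last r)) from f.2.1 (Fin.le_last _))]
        rfl
    _ ≤ ∑' p, u p := ENNReal.tsum_comp_le_tsum_of_injective hinj u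
    _ ≤ ∑' g : MonoPosTuple (r + 1),
          mzWeight (Fin.snoc α 1) g.1 * (2 * (g.1 (Fin.last r) : ℝ≥0∞)⁻¹) := by
        rw [ENNReal.tsum_prod']
        refine ENNReal.tsum_le_tsum fun g => ?_
        simp only [u]
        rw [ENNReal.tsum_mul_left]
        exact mul_le_mul_right (tsum_indicator_Ici_inv_sq_le (g.2.2 _)) _
    _ = 2 * mzsENN (Fin.snoc α 2 : Fin (r + 1) → ℕ) := by
        rw [mzsENN, ← ENNReal.tsum_mul_left]
        refine tsum_congr fun g => ?_
        rw [mzWeight_snoc, mzWeight_snoc]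
        ring

theorem mzsENN_two_le : mzsENN (Fin.snoc (ones 0) 2 : Fin 1 → ℕ) ≤ 2 := by
  have hinj : Function.Injective fun f : MonoPosTuple 1 => f.1 0 :=
    fun f f' h => Subtype.ext (funext fun i => by rwa [Subsingleton.elim i 0])
  calc mzsENN (Fin.snoc (ones 0) 2 : Fin 1 → ℕ)
      = ∑' f : MonoPosTuple 1,
          (Set.Ici 1).indicator (fun k : ℕ => (k : ℝ≥0∞)⁻¹ ^ 2) (f.1 0) :=
        tsum_congr fun f => by
          rw [Set.indicator_of_mem (Set.mem_Ici.2 (f.2.2 0))]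
          simp [mzWeight, Fin.snoc]
    _ ≤ ∑' k, (Set.Ici 1).indicator (fun k : ℕ => (k : ℝ≥0∞)⁻¹ ^ 2) k :=
        ENNReal.tsum_comp_le_tsum_of_injective hinj _
    _ ≤ 2 := by simpa using tsum_indicator_Ici_inv_sq_le one_pos

theorem mzsENN_snoc_ones_two_le (q : ℕ) :
    mzsENN (Fin.snoc (ones q) 2 : Fin (q + 1) → ℕ) ≤ 2 ^ (q + 1) := by
  induction q with
  | zero => simpa using mzsENN_two_le
  | succ q ih =>
    rw [ones_succ, pow_succ']
    exact (mzsENN_snoc_snoc_le _).trans (mul_le_mul_right ih 2)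

theorem mzsENN_snoc_ones_ne_top (q n : ℕ) :
    mzsENN (Fin.snoc (ones q) (n + 2) : Fin (q + 1) → ℕ) ≠ ∞ := by
  refine ne_top_of_le_ne_top (ENNReal.pow_ne_top ENNReal.ofNat_ne_top) <|
    (ENNReal.tsum_le_tsum fun f => mzWeight_anti ?_ f.2.2).trans (mzsENN_snoc_ones_two_le q)
  intro j
  induction j using Fin.lastCases <;> simp

theorem stmt17 (q n : ℕ) :
    mzs (Fin.snoc (ones q) (n + 2)) =
      ∑ r ∈ Finset.Icc 1 (q + 1),
        ∑ α ∈ (Finset.Nat.antidiagonalTuple r (q + 1)).filter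
            (fun α => ∀ i, 0 < α i),
          mzv (fun i : Fin r => α i + if (i : ℕ) = r - 1 then n + 1 else 0) := by
  have hfin := mzsENN_snoc_ones_ne_top q n
  rw [mzsENN_eq_sum_mzvENN_blockSum, ENNReal.sum_ne_top] at hfin
  rw [mzs_eq_toReal_mzsENN, mzsENN_eq_sum_mzvENN_blockSum, ENNReal.toReal_sum hfin,
    sum_positive_antidiagonalTuple_eq_sum_composition q.succ_pos
      fun x => mzv fun i : Fin x.1 => x.2 i + if (i : ℕ) = x.1 - 1 then n + 1 else 0]
  refine sum_congr rfl fun c _ => ?_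
  rw [mzv_eq_toReal_mzvENN, ← blockSum_snoc_ones c (n + 1)]
end
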